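/- arXiv:math/9911018 — 5 statements merged into one kernel-verified Lean document; each statement's English description precedes it below -/
import Mathlib

section
/- Let P₁(t),…,P_J(t) be pairwise relatively prime reciprocal polynomials and P = ∏ P_j. Then the canonical map OA/I_{P} → ∏_j OA/I_{P_j} induced by the projections is a Lie algebra isomorphism. -/
/-!
An element of `OA` lies in every `I_{P_j}` iff each `P_j` divides its entries, iff (by
coprimality) `P` does, so the kernel of `OA → ⨁ OA/I_{P_j}` is `I_P`. For surjectivity one
needs Laurent polynomials `s_j ≡ δ_{jk} mod P_k` fixed by `t ↦ t⁻¹`, because multiplication by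
such an `s_j` preserves `OA`; then `∑ s_j X_j` lifts `(X_j)_j`. They exist because a reciprocal
`P_k` divides `p(t⁻¹)` whenever it divides `p(t)`, so the symmetrization `1 - (1 - u)(1 - u(t⁻¹))`
of an ordinary Chinese-remainder element `u` still works.
-/

open LaurentPolynomial

noncomputable section

namespace Onsager

attribute [local instance 100] LieRing.ofAssociativeRing

/-- Laurent polynomials over ℂ, i.e. the ring `ℂ[t,t⁻¹]`. -/
abbrev R : Type := LaurentPolynomial ℂ

/-- The involution `t ↦ t⁻¹` of `ℂ[t,t⁻¹]`. -/
abbrev inv : R ≃ₐ[ℂ] R := LaurentPolynomial.invert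

/-- The loop algebra of `gl₂`: 2×2 matrices over `ℂ[t,t⁻¹]`.  The loop algebra
`L(sl₂) = ℂ[t,t⁻¹] ⊗ sl₂` is its Lie subalgebra of traceless matrices. -/
abbrev Loop : Type := Matrix (Fin 2) (Fin 2) R

/-- The standard generator `e` of `sl₂`, viewed inside the loop algebra. -/
def e : Loop := !![0, 1; 0, 0]
/-- The standard generator `f` of `sl₂`. -/
def f : Loop := !![0, 0; 1, 0]
/-- The standard generator `h` of `sl₂`. -/
def h : Loop := !![1, 0; 0, -1]

/-- The element `p(t)e + q(t)f + r(t)h` of the loop algebra. -/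
def elt (p q r : R) : Loop := p • e + q • f + r • h

lemma elt_eq (p q r : R) : elt p q r = !![r, p; q, -r] := by
  ext i j
  fin_cases i <;> fin_cases j <;> simp [elt, e, f, h]

/-- The swap matrix implementing the involution `θ` of `sl₂`. -/
def Sw : Loop := !![0, 1; 1, 0]

/-- The involution `θ̂` of the loop algebra, `θ̂(p(t) ⊗ x) = p(t⁻¹) ⊗ θ(x)`,
where `θ(e) = f`, `θ(f) = e`, `θ(h) = -h`. -/
def thetaHat (x : Loop) : Loop := Sw * x.map inv * Sw

lemma Sw_mul_Sw : Sw * Sw = 1 := by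
  ext i j
  fin_cases i <;> fin_cases j <;>
    simp [Sw, Matrix.mul_apply, Fin.sum_univ_two, Matrix.one_apply]

lemma map_inv_eq (x : Loop) : x.map inv = (AlgEquiv.mapMatrix (R := ℂ) inv) x := rfl

lemma thetaHat_mul (x y : Loop) : thetaHat (x * y) = thetaHat x * thetaHat y := by
  simp only [thetaHat, map_inv_eq, map_mul]
  calc Sw * (inv.mapMatrix x * inv.mapMatrix y) * Sw
      = Sw * inv.mapMatrix x * (Sw * Sw) * (inv.mapMatrix y * Sw) := by
        rw [Sw_mul_Sw]; noncomm_ring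
    _ = Sw * inv.mapMatrix x * Sw * (Sw * (inv.mapMatrix y * Sw)) := by noncomm_ring
    _ = _ := by noncomm_ring

lemma thetaHat_add (x y : Loop) : thetaHat (x + y) = thetaHat x + thetaHat y := by
  simp only [thetaHat, map_inv_eq, map_add, mul_add, add_mul]

lemma thetaHat_sub (x y : Loop) : thetaHat (x - y) = thetaHat x - thetaHat y := by
  simp only [thetaHat, map_inv_eq, map_sub, mul_sub, sub_mul]

lemma thetaHat_smul (c : ℂ) (x : Loop) : thetaHat (c • x) = c • thetaHat x := by
  simp only [thetaHat, map_inv_eq, map_smul, Matrix.smul_mul, Matrix.mul_smul]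

/-- The Onsager algebra, realized as the subalgebra of the loop algebra of `sl₂`
fixed by the involution `θ̂`. -/
def OASub : LieSubalgebra ℂ Loop where
  carrier := {x | thetaHat x = x ∧ Matrix.trace x = 0}
  add_mem' := by
    rintro x y ⟨hx1, hx2⟩ ⟨hy1, hy2⟩
    exact ⟨by rw [thetaHat_add, hx1, hy1], by simp [hx2, hy2]⟩
  zero_mem' := by
    constructor
    · have := thetaHat_smul 0 0
      simpa using this
    · simp
  smul_mem' := by
    rintro c x ⟨hx1, hx2⟩
    exact ⟨by rw [thetaHat_smul, hx1], by simp [hx2]⟩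
  lie_mem' := by
    rintro x y ⟨hx1, hx2⟩ ⟨hy1, hy2⟩
    constructor
    · rw [Ring.lie_def, thetaHat_sub, thetaHat_mul, thetaHat_mul, hx1, hy1]
    · rw [Ring.lie_def]
      simp [Matrix.trace_mul_comm x y]

/-- The Onsager algebra as a type (a Lie algebra over ℂ). -/
abbrev OA : Type := ↥OASub

/-- For a polynomial `P(t)`, the ideal `I_P` of the Onsager algebra consisting of the
elements `p(t)e + p(t⁻¹)f + q(t)h` with `P | p` and `P | q`. -/
def IP (P : Polynomial ℂ) : LieIdeal ℂ OA where
  carrier := {X | ∀ i j, P.toLaurent ∣ (X : Loop) i j}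
  add_mem' := by
    intro x y hx hy i j
    simpa using dvd_add (hx i j) (hy i j)
  zero_mem' := by intro i j; simp
  smul_mem' := by
    intro c x hx i j
    have : ((c • x : OA) : Loop) i j = c • ((x : Loop) i j) := rfl
    rw [this, Algebra.smul_def]
    exact (hx i j).mul_left _
  lie_mem := by
    intro x m hm i j
    have hco : ((⁅x, m⁆ : OA) : Loop) = ⁅(x : Loop), (m : Loop)⁆ := rfl
    rw [hco, Ring.lie_def]
    have h1 : P.toLaurent ∣ ((x : Loop) * (m : Loop)) i j := by
      rw [Matrix.mul_apply]
      exact Finset.dvd_sum fun k _ => (hm k j).mul_left _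
    have h2 : P.toLaurent ∣ ((m : Loop) * (x : Loop)) i j := by
      rw [Matrix.mul_apply]
      exact Finset.dvd_sum fun k _ => (hm i k).mul_right _
    simpa using dvd_sub h1 h2

/-- A nonconstant monic polynomial `P` of degree `d` is *reciprocal* if
`P(t) = ± t^d P(t⁻¹)`. -/
def IsReciprocal (P : Polynomial ℂ) : Prop :=
  P.Monic ∧ 0 < P.natDegree ∧
    (P.toLaurent = T (P.natDegree : ℤ) * inv P.toLaurent ∨
     P.toLaurent = -(T (P.natDegree : ℤ) * inv P.toLaurent))

/-- The elementary reciprocal polynomial `U_a`. -/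
def U (a : ℂ) : Polynomial ℂ :=
  if a = 1 ∨ a = -1 then Polynomial.X - Polynomial.C a
  else Polynomial.X ^ 2 - Polynomial.C (a + a⁻¹) * Polynomial.X + 1

/-- Evaluation of a Laurent polynomial at a nonzero complex number. -/
def evalL (a : ℂ) (p : R) : ℂ := p.coeff.sum fun n c => c * a ^ n

/-- Evaluation `ev_a` of loop-algebra elements at `t = a`. -/
def ev (a : ℂ) (x : Loop) : Matrix (Fin 2) (Fin 2) ℂ := x.map (evalL a)

/-- The element `A_m = 2t^m e + 2t^{-m} f` of the loop algebra. -/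
def AmL (m : ℤ) : Loop := elt (2 * T m) (2 * T (-m)) 0

/-- The element `G_m = (t^m - t^{-m}) h` of the loop algebra. -/
def GmL (m : ℤ) : Loop := elt 0 0 (T m - T (-m))

lemma thetaHat_elt (p q r : R) :
    thetaHat (elt p q r) = elt (inv q) (inv p) (-(inv r)) := by
  rw [elt_eq, elt_eq]
  have hmap : (!![r, p; q, -r] : Loop).map ⇑inv = !![inv r, inv p; inv q, -(inv r)] := by
    ext i j
    fin_cases i <;> fin_cases j <;> simp [Matrix.map_apply]
  rw [thetaHat, hmap, Sw]
  ext i j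
  fin_cases i <;> fin_cases j <;>
    simp [Matrix.mul_apply, Fin.sum_univ_two]

lemma elt_mem (p r : R) (hr : inv r = -r) : elt p (inv p) r ∈ OASub := by
  constructor
  · rw [thetaHat_elt, hr, neg_neg, LaurentPolynomial.involutive_invert p]
  · rw [elt_eq]
    simp [Matrix.trace_fin_two]

/-- `A_m` as an element of the Onsager algebra. -/
def Am (m : ℤ) : OA :=
  ⟨AmL m, by
    have h2 : inv (2 * T m : R) = 2 * T (-m) := by simp [map_ofNat]
    have hm := elt_mem (2 * T m) 0 (by simp)
    rw [h2] at hm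
    exact hm⟩

/-- `G_m` as an element of the Onsager algebra. -/
def Gm (m : ℤ) : OA :=
  ⟨GmL m, by
    have hm := elt_mem 0 (T m - T (-m)) (by simp [neg_sub])
    rw [map_zero] at hm
    exact hm⟩

end Onsager

open scoped DirectSum Function

namespace LieIdeal

variable {R L ι : Type*} [CommRing R] [LieRing L] [LieAlgebra R L] [Fintype ι]

def toDirectSumQuotient (I : ι → LieIdeal R L) : L →ₗ⁅R⁆ ⨁ j, L ⧸ I j :=
  { (DirectSum.linearEquivFunOnFintype R ι fun j => L ⧸ I j).symm.toLinearMap ∘ₗ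
      LinearMap.pi fun j => (I j).toSubmodule.mkQ with
    map_lie' := fun {_ _} => by
      ext j
      rw [DirectSum.bracket_apply]
      rfl }

theorem toDirectSumQuotient_apply (I : ι → LieIdeal R L) (x : L) (j : ι) :
    toDirectSumQuotient I x j = LieSubmodule.Quotient.mk x :=
  rfl

theorem ker_toDirectSumQuotient (I : ι → LieIdeal R L) :
    (toDirectSumQuotient I).ker = ⨅ j, I j := by
  ext x
  simp only [LieHom.mem_ker, LieSubmodule.mem_iInf, DirectSum.ext_iff,
    toDirectSumQuotient_apply, DirectSum.zero_apply, LieSubmodule.Quotient.mk_eq_zero']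

theorem exists_lieEquiv_quotient_directSum {K : LieIdeal R L} (I : ι → LieIdeal R L)
    (hK : K = ⨅ j, I j) (hsurj : Function.Surjective (toDirectSumQuotient I)) :
    ∃ e : (L ⧸ K) ≃ₗ⁅R⁆ ⨁ j, L ⧸ I j,
      ∀ (x : L) (j : ι), e (LieSubmodule.Quotient.mk x) j = LieSubmodule.Quotient.mk x := by
  set f := toDirectSumQuotient I
  obtain rfl : K = f.ker := hK.trans (ker_toDirectSumQuotient I).symm
  let g : (L ⧸ f.ker) →ₗ⁅R⁆ ⨁ j, L ⧸ I j := f.range.incl.comp f.quotKerEquivRange.toLieHom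
  have hg : Function.Bijective g := by
    refine ⟨Subtype.val_injective.comp f.quotKerEquivRange.injective, fun y => ?_⟩
    obtain ⟨x, rfl⟩ := hsurj y
    exact ⟨LieSubmodule.Quotient.mk x, rfl⟩
  exact ⟨LieEquiv.ofBijective g hg, fun _ _ => rfl⟩

end LieIdeal

theorem exists_dvd_sub_one_and_forall_dvd {A ι : Type*} [CommRing A] [Fintype ι] [DecidableEq ι]
    {P : ι → A} (hcop : Pairwise (IsCoprime on P)) (j : ι) :
    ∃ u : A, P j ∣ u - 1 ∧ ∀ k ≠ j, P k ∣ u := by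
  obtain ⟨a, b, hab⟩ : IsCoprime (P j) (∏ k ∈ Finset.univ.erase j, P k) :=
    IsCoprime.prod_right fun k hk => hcop (Finset.ne_of_mem_erase hk).symm
  refine ⟨b * ∏ k ∈ Finset.univ.erase j, P k, ⟨-a, by linear_combination hab⟩, fun k hk => ?_⟩
  exact (Finset.dvd_prod_of_mem _ (Finset.mem_erase.mpr ⟨hk, Finset.mem_univ k⟩)).mul_left b

namespace Onsager

attribute [local instance 100] LieRing.ofAssociativeRing

theorem mem_IP {Q : Polynomial ℂ} {X : OA} :
    X ∈ IP Q ↔ ∀ i j, Q.toLaurent ∣ (X : Loop) i j :=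
  Iff.rfl

theorem toLaurent_prod_dvd_iff {ι : Type*} [Fintype ι] {P : ι → Polynomial ℂ}
    (hcop : Pairwise (IsCoprime on P)) {x : R} :
    (∏ j, P j).toLaurent ∣ x ↔ ∀ j, (P j).toLaurent ∣ x := by
  rw [map_prod]
  exact ⟨fun h j => (Finset.dvd_prod_of_mem (fun j => (P j).toLaurent) (Finset.mem_univ j)).trans h,
    Fintype.prod_dvd_of_coprime fun _ _ hjk => (hcop hjk).map Polynomial.toLaurent⟩

theorem IP_prod_eq_iInf {ι : Type*} [Fintype ι] {P : ι → Polynomial ℂ}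
    (hcop : Pairwise (IsCoprime on P)) : IP (∏ j, P j) = ⨅ j, IP (P j) := by
  ext X
  simp only [LieSubmodule.mem_iInf, mem_IP, toLaurent_prod_dvd_iff hcop]
  exact ⟨fun h j a b => h a b j, fun h a b j => h j a b⟩

theorem IsReciprocal.toLaurent_dvd_invert {Q : Polynomial ℂ} (hQ : IsReciprocal Q) :
    Q.toLaurent ∣ inv Q.toLaurent := by
  rcases hQ.2.2 with hQ | hQ <;> replace hQ := congrArg inv hQ <;>
    simp only [map_neg, map_mul, invert_T, involutive_invert _] at hQ
  · exact hQ ▸ dvd_mul_left _ _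
  · exact hQ ▸ (dvd_mul_left _ _).neg_right

theorem IsReciprocal.dvd_invert {Q : Polynomial ℂ} (hQ : IsReciprocal Q) {x : R}
    (hx : Q.toLaurent ∣ x) : Q.toLaurent ∣ inv x := by
  obtain ⟨c, rfl⟩ := hx
  rw [map_mul]
  exact hQ.toLaurent_dvd_invert.mul_right _

theorem exists_invert_eq_self_and_dvd_sub_one_and_forall_dvd {ι : Type*} [Fintype ι]
    [DecidableEq ι] {P : ι → Polynomial ℂ} (hrec : ∀ j, IsReciprocal (P j))
    (hcop : Pairwise (IsCoprime on P)) (j : ι) :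
    ∃ s : R, inv s = s ∧ (P j).toLaurent ∣ s - 1 ∧ ∀ k ≠ j, (P k).toLaurent ∣ s := by
  obtain ⟨u, hu_one, hu_zero⟩ := exists_dvd_sub_one_and_forall_dvd hcop j
  set v : R := u.toLaurent
  have hv_one : (P j).toLaurent ∣ 1 - v := by
    simpa [v, dvd_sub_comm] using Polynomial.toLaurent.map_dvd hu_one
  refine ⟨1 - (1 - v) * (1 - inv v), ?_, ?_, fun k hk => ?_⟩
  · simp only [map_sub, map_mul, map_one, involutive_invert v]
    ring
  · rw [show 1 - (1 - v) * (1 - inv v) - 1 = -((1 - v) * (1 - inv v)) by ring]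
    exact (hv_one.mul_right _).neg_right
  · have hv_zero : (P k).toLaurent ∣ v := Polynomial.toLaurent.map_dvd (hu_zero k hk)
    rw [show 1 - (1 - v) * (1 - inv v) = v + inv v - v * inv v by ring]
    exact dvd_sub (dvd_add hv_zero ((hrec k).dvd_invert hv_zero)) (hv_zero.mul_right _)

theorem smul_mem_OASub {s : R} (hs : inv s = s) {x : Loop} (hx : x ∈ OASub) :
    s • x ∈ OASub := by
  obtain ⟨hx_fix, hx_trace⟩ := hx
  refine ⟨?_, by rw [Matrix.trace_smul, hx_trace, smul_zero]⟩
  have hmap : (s • x).map inv = inv s • x.map inv := by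
    ext i j
    simp [Matrix.map_apply, map_mul]
  rw [thetaHat, hmap, Matrix.mul_smul, Matrix.smul_mul, hs, ← thetaHat, hx_fix]

theorem toDirectSumQuotient_IP_surjective {ι : Type*} [Fintype ι] [DecidableEq ι]
    {P : ι → Polynomial ℂ} (hrec : ∀ j, IsReciprocal (P j))
    (hcop : Pairwise (IsCoprime on P)) :
    Function.Surjective (LieIdeal.toDirectSumQuotient fun j => IP (P j)) := by
  intro y
  choose X hX using fun j => LieSubmodule.Quotient.surjective_mk' (IP (P j)) (y j)
  choose s hs_symm hs_one hs_zero using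
    exists_invert_eq_self_and_dvd_sub_one_and_forall_dvd hrec hcop
  let Y : OA := ⟨∑ k, s k • (X k : Loop), sum_mem fun k _ => smul_mem_OASub (hs_symm k) (X k).2⟩
  refine ⟨Y, DirectSum.ext fun j => ?_⟩
  rw [LieIdeal.toDirectSumQuotient_apply, ← hX j]
  refine (Submodule.Quotient.eq _).mpr fun a b => ?_
  have hentry : ((Y - X j : OA) : Loop) a b =
      (s j - 1) * (X j : Loop) a b + ∑ k ∈ Finset.univ.erase j, s k * (X k : Loop) a b := by
    change (∑ k, s k • (X k : Loop) - X j) a b = _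
    rw [Matrix.sub_apply, Matrix.sum_apply, ← Finset.add_sum_erase _ _ (Finset.mem_univ j)]
    simp only [Matrix.smul_apply, smul_eq_mul]
    ring
  rw [hentry]
  exact dvd_add ((hs_one j).mul_right _)
    (Finset.dvd_sum fun k hk => (hs_zero k j (Finset.ne_of_mem_erase hk).symm).mul_right _)

open scoped DirectSum in
/-- **Chinese remainder for the Onsager algebra.**  If `P₁, …, P_J` are pairwise
relatively prime reciprocal polynomials and `P = ∏ Pⱼ`, then the canonical map
`OA/I_P → ∏ⱼ OA/I_{Pⱼ}` induced by the projections is a Lie algebra isomorphism. -/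
theorem quotient_product_decomposition (J : ℕ) (P : Fin J → Polynomial ℂ)
    (hrec : ∀ j, IsReciprocal (P j))
    (hcop : ∀ j k, j ≠ k → IsCoprime (P j) (P k)) :
    ∃ eqv : (OA ⧸ IP (∏ j, P j)) ≃ₗ⁅ℂ⁆ (⨁ j : Fin J, OA ⧸ IP (P j)),
      ∀ (X : OA) (j : Fin J),
        (eqv (LieSubmodule.Quotient.mk (N := IP (∏ j, P j)) X)) j =
          LieSubmodule.Quotient.mk (N := IP (P j)) X := by
  have hcop_pairwise : Pairwise (IsCoprime on P) := fun j k => hcop j k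
  exact LieIdeal.exists_lieEquiv_quotient_directSum _ (IP_prod_eq_iInf hcop_pairwise)
    (toDirectSumQuotient_IP_surjective hrec hcop_pairwise)

end Onsager
end
end

section
/- Let P(t) = (t−1)^L (t+1)^K P*(t) be a reciprocal polynomial with P*(±1) ≠ 0, and let P̃(t) = (t−1)^{2⌊L/2⌋}(t+1)^{2⌊K/2⌋}P*(t). Then Z(I_P) = { p(t)e + p(t^{−1})f + q(t)h ∈ OA : P̃ | p and P | q }. Consequently I_P is a closed ideal if and only if L and K are both even. -/
open LaurentPolynomial

noncomputable section

namespace Onsager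

attribute [local instance 100] LieRing.ofAssociativeRing

/-!
Write `x ∈ OA` as `q h + p e + p̄ f`, where `p̄(t) = p(t⁻¹)` and `q̄ = -q`.  Bracketing `x` with
`A₀` and `G₁` shows that `x ∈ Z(I_P)` forces `P ∣ q`, `P ∣ p (t - t⁻¹)` and `P ∣ p - p̄`.  At a
self-inverse point `u = ±1` the second condition bounds the order of `p` at `u` only up to one, but
when that order is odd, `p - p̄` vanishes to exactly the same order; hence `(t ∓ 1)^{2⌊·/2⌋} ∣ p`,
and `P* ∣ p` because `P*` is prime to `t - t⁻¹`.  Conversely, evaluating the reciprocity of `P` at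
`t = ±1`, where `P*` does not vanish, gives `P̃(t⁻¹) = t^{2n} P̃(t)`.  Then every entry of `[x, y]`
not already divisible by `P` is a product `a z` with `P̃ ∣ a` and `z̄ = -t^{2m} z`; such a `z`
vanishes at `±1` and so supplies the factors `(t - 1)(t + 1)` by which `P̃` may fall short of `P`.
-/

abbrev evalAt (u : ℂˣ) : R →+* ℂ := eval₂ (RingHom.id ℂ) u

def linearFactor (u : ℂˣ) : R := (Polynomial.X - Polynomial.C (u : ℂ)).toLaurent

section LinearFactor

variable (u : ℂˣ)

@[simp]
lemma evalAt_toLaurent (g : Polynomial ℂ) : evalAt u g.toLaurent = g.eval (u : ℂ) := by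
  simp only [evalAt, eval₂_toLaurent]; rfl

@[simp]
lemma evalAt_linearFactor (v : ℂˣ) : evalAt v (linearFactor u) = v - u := by
  simp [linearFactor]

lemma evalAt_invert (p : R) : evalAt u (invert p) = evalAt u⁻¹ p := by
  induction p using LaurentPolynomial.induction_on' with
  | add p q hp hq => simp only [map_add, hp, hq]
  | C_mul_T n a => simp [zpow_neg]

lemma linearFactor_ne_zero : linearFactor u ≠ 0 :=
  Polynomial.toLaurent_ne_zero.mpr (Polynomial.X_sub_C_ne_zero _)

variable {u}

lemma exists_eq_linearFactor_pow_mul {z : R} (hz : z ≠ 0) :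
    ∃ (m : ℕ) (v : R), z = linearFactor u ^ m * v ∧ evalAt u v ≠ 0 := by
  obtain ⟨n, g, hg⟩ := exists_T_pow z
  have hg0 : g ≠ 0 := by
    rintro rfl
    exact mul_ne_zero hz (isUnit_T _).ne_zero (by simpa using hg.symm)
  set m := g.rootMultiplicity (u : ℂ)
  refine ⟨m, (g /ₘ (Polynomial.X - Polynomial.C (u : ℂ)) ^ m).toLaurent * T (-n), ?_, ?_⟩
  · have hz : z = g.toLaurent * T (-n) := by rw [hg, mul_assoc, ← T_add]; simp
    conv_lhs => rw [hz, ← Polynomial.pow_mul_divByMonic_rootMultiplicity_eq g (u : ℂ)]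
    rw [map_mul, map_pow, linearFactor, mul_assoc]
  · simpa using Polynomial.eval_divByMonic_pow_rootMultiplicity_ne_zero (u : ℂ) hg0

lemma linearFactor_dvd_iff {z : R} : linearFactor u ∣ z ↔ evalAt u z = 0 := by
  refine ⟨fun ⟨w, hw⟩ => by simp [hw], fun hz => ?_⟩
  rcases eq_or_ne z 0 with rfl | hz0
  · exact dvd_zero _
  obtain ⟨m, v, rfl, hv⟩ := exists_eq_linearFactor_pow_mul (u := u) hz0
  rcases m with _ | m
  · simp_all
  · exact dvd_mul_of_dvd_left (dvd_pow_self _ m.succ_ne_zero) _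

lemma le_of_linearFactor_pow_dvd {m k : ℕ} {w : R}
    (h : linearFactor u ^ m ∣ linearFactor u ^ k * w) (hw : evalAt u w ≠ 0) : m ≤ k := by
  by_contra! hkm
  have h' : linearFactor u ^ k * linearFactor u ∣ linearFactor u ^ k * w :=
    (pow_succ (linearFactor u) k ▸ pow_dvd_pow _ hkm).trans h
  exact hw (linearFactor_dvd_iff.mp
    ((mul_dvd_mul_iff_left (pow_ne_zero k (linearFactor_ne_zero u))).mp h'))

lemma isCoprime_linearFactor {z : R} (hz : evalAt u z ≠ 0) : IsCoprime (linearFactor u) z := by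
  obtain ⟨w, hw⟩ : linearFactor u ∣ z - C (evalAt u z) := linearFactor_dvd_iff.mpr (by simp)
  refine ⟨-(C (evalAt u z)⁻¹ * w), C (evalAt u z)⁻¹, ?_⟩
  have hC : C (evalAt u z)⁻¹ * C (evalAt u z) = 1 := by rw [← map_mul, inv_mul_cancel₀ hz, map_one]
  linear_combination C (evalAt u z)⁻¹ * hw + hC

end LinearFactor

section SelfInverse

variable {u : ℂˣ}

lemma invert_linearFactor_pow (hu : u⁻¹ = u) (n : ℕ) :
    invert (linearFactor u ^ n) = C ((-(u : ℂ)) ^ n) * (T (-n) * linearFactor u ^ n) := by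
  have hT : (T (-1) * T 1 : R) = 1 := by rw [← T_add]; simp
  have hC : C (u : ℂ) * C (u : ℂ) = 1 := by
    rw [← map_mul, ← Units.val_mul]; nth_rw 2 [← hu]; simp
  have h1 : invert (linearFactor u) = C (-(u : ℂ)) * (T (-1) * linearFactor u) := by
    simp only [linearFactor, map_sub, Polynomial.toLaurent_X, Polynomial.toLaurent_C, invert_T,
      invert_C, map_neg]
    linear_combination (C (u : ℂ)) * hT - T (-1) * hC
  rw [map_pow, h1, mul_pow, mul_pow, ← map_pow, T_pow]
  ring_nf

lemma evalAt_eq_zero_of_invert_eq_neg (hu : u⁻¹ = u) {z : R} {n : ℤ}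
    (h : invert z = -(T (2 * n) * z)) : evalAt u z = 0 := by
  have hu2 : u ^ (2 * n) = 1 := by
    rw [zpow_mul, zpow_two, ← mul_inv_cancel u]; nth_rw 2 [← hu]; simp
  have := congrArg (evalAt u) h
  rw [evalAt_invert, hu, map_neg, map_mul] at this
  simp only [evalAt, eval₂_T, hu2, Units.val_one, one_mul] at this
  linear_combination this / 2

lemma linearFactor_pow_dvd_of_dvd_sub_invert (hu : u⁻¹ = u) {M : ℕ} {p r : R}
    (hr : evalAt u r ≠ 0) (hA : linearFactor u ^ M ∣ p * linearFactor u * r)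
    (hB : linearFactor u ^ M ∣ p - invert p) : linearFactor u ^ (2 * (M / 2)) ∣ p := by
  rcases eq_or_ne p 0 with rfl | hp
  · exact dvd_zero _
  obtain ⟨a, v, rfl, hv⟩ := exists_eq_linearFactor_pow_mul (u := u) hp
  have hMa : M ≤ a + 1 := by
    refine le_of_linearFactor_pow_dvd (w := v * r) ?_ (by simpa using ⟨hv, hr⟩)
    rwa [show linearFactor u ^ a * v * linearFactor u * r = linearFactor u ^ (a + 1) * (v * r) by
      ring] at hA
  have hMa_odd : Odd a → M ≤ a := by
    intro ha
    set w := v - C ((-(u : ℂ)) ^ a) * (T (-a) * invert v)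
    have hw :
        linearFactor u ^ a * v - invert (linearFactor u ^ a * v) = linearFactor u ^ a * w := by
      rw [map_mul, invert_linearFactor_pow hu]; ring
    have hsign : (-(u : ℂ)) ^ a * ((u ^ (-(a : ℤ)) : ℂˣ) : ℂ) = -1 := by
      rw [ha.neg_pow, zpow_neg, zpow_natCast, Units.val_inv_eq_inv_val, Units.val_pow_eq_pow_val,
        neg_mul, mul_inv_cancel₀ (pow_ne_zero _ u.ne_zero)]
    refine le_of_linearFactor_pow_dvd (w := w) (hw ▸ hB) ?_
    have : evalAt u w = 2 * evalAt u v := by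
      simp only [w, map_sub, map_mul, evalAt_invert, hu]
      simp only [evalAt, eval₂_C, eval₂_T, RingHom.id_apply]
      rw [← mul_assoc, hsign]; ring
    rw [this]; exact mul_ne_zero two_ne_zero hv
  have : 2 * (M / 2) ≤ a := by
    rcases Nat.even_or_odd a with ha | ha
    · obtain ⟨c, rfl⟩ := ha; omega
    · have := hMa_odd ha; omega
  exact dvd_mul_of_dvd_left (pow_dvd_pow _ this) v

end SelfInverse

lemma isCoprime_linearFactor_one_neg_one : IsCoprime (linearFactor 1) (linearFactor (-1)) :=
  isCoprime_linearFactor (by norm_num)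

lemma linearFactor_one_mul_neg_one_dvd {z : R} {n : ℤ} (h : invert z = -(T (2 * n) * z)) :
    linearFactor 1 * linearFactor (-1) ∣ z :=
  isCoprime_linearFactor_one_neg_one.mul_dvd
    (linearFactor_dvd_iff.mpr (evalAt_eq_zero_of_invert_eq_neg inv_one h))
    (linearFactor_dvd_iff.mpr (evalAt_eq_zero_of_invert_eq_neg inv_neg_one h))

lemma T_one_sub_T_neg_one : (T 1 - T (-1) : R) = linearFactor 1 * linearFactor (-1) * T (-1) := by
  have hT : (T (-1) * T 1 : R) = 1 := by rw [← T_add]; simp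
  simp only [linearFactor, map_sub, Polynomial.toLaurent_X, Units.val_one,
    Units.val_neg, map_neg, map_one]
  linear_combination (-T 1 : R) * hT

/-- The shift is even so that `t ^ (2 * n)` evaluates to `1` at both `t = 1` and `t = -1`. -/
def IsEvenReciprocal (g : R) : Prop := ∃ n : ℤ, invert g = T (2 * n) * g

namespace IsEvenReciprocal

variable {g g' : R}

lemma mul (hg : IsEvenReciprocal g) (hg' : IsEvenReciprocal g') : IsEvenReciprocal (g * g') := by
  obtain ⟨n, hn⟩ := hg
  obtain ⟨n', hn'⟩ := hg'
  exact ⟨n + n', by rw [map_mul, hn, hn', mul_add, T_add]; ring⟩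

lemma pow (hg : IsEvenReciprocal g) (k : ℕ) : IsEvenReciprocal (g ^ k) := by
  induction k with
  | zero => exact ⟨0, by simp⟩
  | succ k ih => rw [pow_succ]; exact ih.mul hg

lemma dvd_invert (hg : IsEvenReciprocal g) {p : R} (hp : g ∣ p) : g ∣ invert p := by
  obtain ⟨n, hn⟩ := hg
  obtain ⟨s, rfl⟩ := hp
  exact ⟨T (2 * n) * invert s, by rw [map_mul, hn]; ring⟩

lemma exists_mul_invert_sub_eq (hg : IsEvenReciprocal g) {p : R} (hp : g ∣ p) (q : R) :
    ∃ (n : ℤ) (z : R), p * invert q - q * invert p = g * z ∧ invert z = -(T (2 * n) * z) := by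
  obtain ⟨m, hm⟩ := hg
  obtain ⟨s, rfl⟩ := hp
  have hT : (T (-(2 * m)) * T (2 * m) : R) = 1 := by rw [← T_add]; simp
  refine ⟨-m, s * invert q - q * T (2 * m) * invert s, by rw [map_mul, hm]; ring, ?_⟩
  simp only [map_sub, map_mul, invert_T, involutive_invert _, mul_neg]
  linear_combination -(q * invert s) * hT

end IsEvenReciprocal

lemma isEvenReciprocal_linearFactor_sq {u : ℂˣ} (hu : u⁻¹ = u) :
    IsEvenReciprocal (linearFactor u ^ 2) := by
  refine ⟨-1, ?_⟩
  rw [invert_linearFactor_pow hu, neg_sq, ← Units.val_pow_eq_pow_val, sq]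
  nth_rw 1 [← hu]
  simp

lemma isEvenReciprocal_of_invert_eq {g : R} {c : ℂ} {k : ℤ} (h : invert g = C c * (T k * g))
    (h1 : evalAt 1 g ≠ 0) (h2 : evalAt (-1) g ≠ 0) : IsEvenReciprocal g := by
  have hc : c = 1 := by
    have := congrArg (evalAt 1) h
    simp only [evalAt_invert, inv_one, map_mul] at this
    simp only [evalAt, eval₂_C, eval₂_T, one_zpow, Units.val_one, RingHom.id_apply] at this
    exact (mul_left_eq_self₀.mp (by linear_combination -this)).resolve_right h1
  have hk : Even k := by
    have := congrArg (evalAt (-1)) h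
    simp only [evalAt_invert, inv_neg_one, map_mul] at this
    simp only [evalAt, eval₂_C, eval₂_T, hc, RingHom.id_apply, one_mul] at this
    rcases Int.even_or_odd k with hk | hk
    · exact hk
    · rw [hk.neg_one_zpow, Units.val_neg, Units.val_one] at this
      exact absurd (by linear_combination this / 2) h2
  obtain ⟨n, rfl⟩ := hk
  exact ⟨n, by rw [h, hc, map_one, one_mul, two_mul]⟩

lemma invert_eq_of_invert_mul_eq {a b : R} {α c : ℂ} {i k : ℤ} (ha : a ≠ 0) (hα : α ≠ 0)
    (hia : invert a = C α * (T i * a)) (h : invert (a * b) = C c * (T k * (a * b))) :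
    invert b = C (c / α) * (T (k - i) * b) := by
  have hunit : C α * T i * a ≠ 0 :=
    mul_ne_zero (mul_ne_zero (by simpa using hα) (isUnit_T i).ne_zero) ha
  refine mul_left_cancel₀ hunit ?_
  have hT : T (k - i) * T i = (T k : R) := by rw [← T_add]; simp
  have hC : C (c / α) * C α = C c := by rw [← map_mul, div_mul_cancel₀ c hα]
  rw [map_mul, hia] at h
  linear_combination h - (a * b) * (C c * hT + T (k - i) * T i * hC)

lemma IsReciprocal.exists_invert_eq {P : Polynomial ℂ} (hP : IsReciprocal P) :
    ∃ (c : ℂ) (k : ℤ), invert P.toLaurent = C c * (T k * P.toLaurent) := by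
  have hT : (T (-(P.natDegree : ℤ)) * T P.natDegree : R) = 1 := by rw [← T_add]; simp
  rcases hP.2.2 with h | h
  · refine ⟨1, -P.natDegree, ?_⟩
    rw [map_one, one_mul]
    nth_rw 2 [h]
    linear_combination (-invert P.toLaurent) * hT
  · refine ⟨-1, -P.natDegree, ?_⟩
    rw [map_neg, map_one]
    nth_rw 2 [h]
    linear_combination (-invert P.toLaurent) * hT

lemma isEvenReciprocal_of_invert_mul_eq {L K : ℕ} {S : R} {c : ℂ} {k : ℤ}
    (hS1 : evalAt 1 S ≠ 0) (hS2 : evalAt (-1) S ≠ 0)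
    (h : invert (linearFactor 1 ^ L * linearFactor (-1) ^ K * S) =
      C c * (T k * (linearFactor 1 ^ L * linearFactor (-1) ^ K * S))) (a b : ℕ) :
    IsEvenReciprocal (linearFactor 1 ^ (2 * a) * linearFactor (-1) ^ (2 * b) * S) := by
  have hinv : invert (linearFactor 1 ^ L * linearFactor (-1) ^ K) =
      C ((-1) ^ L) * (T (-(L + K)) * (linearFactor 1 ^ L * linearFactor (-1) ^ K)) := by
    rw [map_mul, invert_linearFactor_pow inv_one, invert_linearFactor_pow inv_neg_one, neg_add,
      T_add]
    simp only [Units.val_one, Units.val_neg, neg_neg, one_pow, map_one]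
    ring
  have hne : linearFactor 1 ^ L * linearFactor (-1) ^ K ≠ 0 :=
    mul_ne_zero (pow_ne_zero _ (linearFactor_ne_zero _)) (pow_ne_zero _ (linearFactor_ne_zero _))
  have hS := isEvenReciprocal_of_invert_eq
    (invert_eq_of_invert_mul_eq (α := (-1) ^ L) hne (pow_ne_zero _ (by norm_num)) hinv h) hS1 hS2
  rw [pow_mul, pow_mul]
  exact (((isEvenReciprocal_linearFactor_sq inv_one).pow a).mul
    ((isEvenReciprocal_linearFactor_sq inv_neg_one).pow b)).mul hS

lemma dvd_of_dvd_mul_T_sub_T_of_dvd_sub_invert {L K : ℕ} {S p : R}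
    (hS1 : evalAt 1 S ≠ 0) (hS2 : evalAt (-1) S ≠ 0)
    (hA : linearFactor 1 ^ L * linearFactor (-1) ^ K * S ∣ p * (T 1 - T (-1)))
    (hB : linearFactor 1 ^ L * linearFactor (-1) ^ K * S ∣ p - invert p) :
    linearFactor 1 ^ (2 * (L / 2)) * linearFactor (-1) ^ (2 * (K / 2)) * S ∣ p := by
  rw [T_one_sub_T_neg_one, ← mul_assoc, (isUnit_T _).dvd_mul_right, ← mul_assoc] at hA
  have hA' : linearFactor 1 ^ L * linearFactor (-1) ^ K * S ∣
      p * linearFactor (-1) * linearFactor 1 := by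
    rwa [mul_right_comm p] at hA
  have hL : linearFactor 1 ^ L ∣ linearFactor 1 ^ L * linearFactor (-1) ^ K * S :=
    dvd_mul_of_dvd_left (dvd_mul_right _ _) _
  have hK : linearFactor (-1) ^ K ∣ linearFactor 1 ^ L * linearFactor (-1) ^ K * S :=
    dvd_mul_of_dvd_left (dvd_mul_left _ _) _
  have h1 : linearFactor 1 ^ (2 * (L / 2)) ∣ p :=
    linearFactor_pow_dvd_of_dvd_sub_invert (u := 1) inv_one (r := linearFactor (-1)) (by norm_num)
      (hL.trans hA) (hL.trans hB)
  have h2 : linearFactor (-1) ^ (2 * (K / 2)) ∣ p :=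
    linearFactor_pow_dvd_of_dvd_sub_invert (u := -1) inv_neg_one (r := linearFactor 1) (by norm_num)
      (hK.trans hA') (hK.trans hB)
  have hS : S ∣ p := by
    refine ((isCoprime_linearFactor hS1).symm.mul_right
      (isCoprime_linearFactor hS2).symm).dvd_of_dvd_mul_right ?_
    rw [← mul_assoc]
    exact (dvd_mul_left _ _).trans hA
  rw [mul_assoc]
  exact (isCoprime_linearFactor_one_neg_one.pow.mul_right
    (isCoprime_linearFactor hS1).pow_left).mul_dvd h1
      ((isCoprime_linearFactor hS2).pow_left.mul_dvd h2 hS)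

lemma even_and_even_of_dvd {L K : ℕ} {S : R} (hS1 : evalAt 1 S ≠ 0) (hS2 : evalAt (-1) S ≠ 0)
    (h : linearFactor 1 ^ L * linearFactor (-1) ^ K * S ∣
      linearFactor 1 ^ (2 * (L / 2)) * linearFactor (-1) ^ (2 * (K / 2)) * S) :
    Even L ∧ Even K := by
  have hL : L ≤ 2 * (L / 2) := by
    refine le_of_linearFactor_pow_dvd (u := 1) (w := linearFactor (-1) ^ (2 * (K / 2)) * S) ?_
      (by norm_num [hS1])
    rw [← mul_assoc]
    exact (dvd_mul_of_dvd_left (dvd_mul_right _ _) _).trans h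
  have hK : K ≤ 2 * (K / 2) := by
    refine le_of_linearFactor_pow_dvd (u := -1) (w := linearFactor 1 ^ (2 * (L / 2)) * S) ?_
      (by norm_num [hS2])
    rw [← mul_assoc, mul_comm (linearFactor (-1) ^ _)]
    exact (dvd_mul_of_dvd_left (dvd_mul_left _ _) _).trans h
  exact ⟨Nat.even_iff.mpr (by omega), Nat.even_iff.mpr (by omega)⟩

lemma dvd_mul_of_invert_eq_neg {G g a b : R} {n : ℤ}
    (hG : G ∣ g * (linearFactor 1 * linearFactor (-1))) (ha : g ∣ a)
    (hb : invert b = -(T (2 * n) * b)) : G ∣ a * b :=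
  hG.trans (mul_dvd_mul ha (linearFactor_one_mul_neg_one_dvd hb))

lemma pow_mul_pow_mul_dvd_mul {M : Type*} [CommMonoid M] (a b s : M) (L K : ℕ) :
    a ^ L * b ^ K * s ∣ a ^ (2 * (L / 2)) * b ^ (2 * (K / 2)) * s * (a * b) := by
  rw [show a ^ (2 * (L / 2)) * b ^ (2 * (K / 2)) * s * (a * b) =
    a ^ (2 * (L / 2) + 1) * b ^ (2 * (K / 2) + 1) * s by rw [pow_succ, pow_succ]; ac_rfl]
  exact mul_dvd_mul (mul_dvd_mul (pow_dvd_pow _ (by omega)) (pow_dvd_pow _ (by omega))) dvd_rfl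

lemma thetaHat_of (a b c d : R) : thetaHat !![a, b; c, d] = !![inv d, inv c; inv b, inv a] := by
  have hmap : (!![a, b; c, d] : Loop).map inv = !![inv a, inv b; inv c, inv d] := by
    refine Matrix.ext fun i j => ?_
    fin_cases i <;> fin_cases j <;> rfl
  rw [thetaHat, hmap, Sw]
  refine Matrix.ext fun i j => ?_
  fin_cases i <;> fin_cases j <;> simp [Matrix.mul_apply, Fin.sum_univ_two]

lemma coe_eq_elt_and_inv_eq_neg (x : OA) :
    (x : Loop) = elt ((x : Loop) 0 1) (inv ((x : Loop) 0 1)) ((x : Loop) 0 0) ∧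
      inv ((x : Loop) 0 0) = -(x : Loop) 0 0 := by
  obtain ⟨hθ, htr⟩ := x.2
  rw [Matrix.eta_fin_two (x : Loop), thetaHat_of] at hθ
  rw [Matrix.trace_fin_two] at htr
  have h00 := congrFun (congrFun hθ 0) 0
  have h10 := congrFun (congrFun hθ 1) 0
  simp only [Matrix.of_apply, Matrix.cons_val', Matrix.cons_val_zero, Matrix.cons_val_one,
    Matrix.empty_val', Matrix.cons_val_fin_one] at h00 h10
  have h11 : (x : Loop) 1 1 = -(x : Loop) 0 0 := by linear_combination htr
  refine ⟨?_, by rw [← h11, ← h00, involutive_invert]⟩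
  rw [elt_eq, h10, ← h11]
  exact Matrix.eta_fin_two _

lemma lie_elt (p r q p' r' q' : R) :
    ⁅elt p r q, elt p' r' q'⁆ =
      elt (2 * (q * p' - p * q')) (2 * (r * q' - q * r')) (p * r' - p' * r) := by
  rw [Ring.lie_def, elt_eq, elt_eq, elt_eq]
  refine Matrix.ext fun i j => ?_
  fin_cases i <;> fin_cases j <;> simp <;> ring

lemma mem_IP_iff_of_coe_eq_elt {P : Polynomial ℂ} {x : OA} {p r q : R}
    (hx : (x : Loop) = elt p r q) :
    x ∈ IP P ↔ P.toLaurent ∣ p ∧ P.toLaurent ∣ r ∧ P.toLaurent ∣ q := by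
  change (∀ i j, P.toLaurent ∣ (x : Loop) i j) ↔ _
  rw [hx, elt_eq]
  refine ⟨fun h => ⟨by simpa using h 0 1, by simpa using h 1 0, by simpa using h 0 0⟩, ?_⟩
  rintro ⟨hp, hr, hq⟩ i j
  fin_cases i <;> fin_cases j <;> simpa

lemma lie_mem_IP_iff {P : Polynomial ℂ} (x y : OA) :
    ⁅x, y⁆ ∈ IP P ↔
      P.toLaurent ∣ 2 * ((x : Loop) 0 0 * (y : Loop) 0 1 - (x : Loop) 0 1 * (y : Loop) 0 0) ∧
      P.toLaurent ∣ 2 * (inv ((x : Loop) 0 1) * (y : Loop) 0 0 -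
        (x : Loop) 0 0 * inv ((y : Loop) 0 1)) ∧
      P.toLaurent ∣ (x : Loop) 0 1 * inv ((y : Loop) 0 1) - (y : Loop) 0 1 * inv ((x : Loop) 0 1) :=
  mem_IP_iff_of_coe_eq_elt <|
    (congrArg₂ (⁅·, ·⁆) (coe_eq_elt_and_inv_eq_neg x).1 (coe_eq_elt_and_inv_eq_neg y).1).trans
      (lie_elt _ _ _ _ _ _)

lemma dvd_of_forall_lie_mem_IP {P : Polynomial ℂ} {x : OA} (hx : ∀ y, ⁅x, y⁆ ∈ IP P) :
    P.toLaurent ∣ (x : Loop) 0 1 * (T 1 - T (-1)) ∧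
      P.toLaurent ∣ (x : Loop) 0 1 - inv ((x : Loop) 0 1) ∧ P.toLaurent ∣ (x : Loop) 0 0 := by
  have h2 : IsUnit (2 : R) := by
    rw [← map_ofNat C 2]; exact (Ne.isUnit two_ne_zero).map C
  obtain ⟨hA01, -, hA00⟩ := (lie_mem_IP_iff x (Am 0)).1 (hx _)
  obtain ⟨hG01, -, -⟩ := (lie_mem_IP_iff x (Gm 1)).1 (hx _)
  simp only [Am, Gm, AmL, GmL, elt_eq, Matrix.of_apply, Matrix.cons_val', Matrix.cons_val_zero,
    Matrix.cons_val_one, Matrix.empty_val', Matrix.cons_val_fin_one, neg_zero,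
    T_zero, mul_one, map_ofNat] at hA01 hA00 hG01
  refine ⟨?_, ?_, ?_⟩
  · rw [show 2 * ((x : Loop) 0 0 * 0 - (x : Loop) 0 1 * (T 1 - T (-1))) =
      -(2 * ((x : Loop) 0 1 * (T 1 - T (-1)))) by ring, dvd_neg, h2.dvd_mul_left] at hG01
    exact hG01
  · rwa [show (x : Loop) 0 1 * 2 - 2 * inv ((x : Loop) 0 1) =
      2 * ((x : Loop) 0 1 - inv ((x : Loop) 0 1)) by ring, h2.dvd_mul_left] at hA00
  · rwa [show 2 * ((x : Loop) 0 0 * 2 - (x : Loop) 0 1 * 0) = 2 * (2 * (x : Loop) 0 0) by ring,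
      h2.dvd_mul_left, h2.dvd_mul_left] at hA01

lemma lie_mem_IP_of_dvd {P Pt : Polynomial ℂ} (hPt : IsEvenReciprocal Pt.toLaurent)
    (hPPt : P.toLaurent ∣ Pt.toLaurent * (linearFactor 1 * linearFactor (-1))) {x : OA}
    (hp : Pt.toLaurent ∣ (x : Loop) 0 1) (hq : P.toLaurent ∣ (x : Loop) 0 0) (y : OA) :
    ⁅x, y⁆ ∈ IP P := by
  have hy : invert ((y : Loop) 0 0) = -(T (2 * 0) * (y : Loop) 0 0) := by
    simpa using (coe_eq_elt_and_inv_eq_neg y).2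
  obtain ⟨n, z, hz, hzinv⟩ := hPt.exists_mul_invert_sub_eq hp ((y : Loop) 0 1)
  refine (lie_mem_IP_iff x y).2 ⟨?_, ?_, ?_⟩
  · exact (dvd_sub (hq.mul_right _) (dvd_mul_of_invert_eq_neg hPPt hp hy)).mul_left 2
  · exact (dvd_sub (dvd_mul_of_invert_eq_neg hPPt (hPt.dvd_invert hp) hy)
      (hq.mul_right _)).mul_left 2
  · exact hz ▸ dvd_mul_of_invert_eq_neg hPPt dvd_rfl hzinv

lemma forall_lie_mem_IP_iff {L K : ℕ} {S : R} {P Pt : Polynomial ℂ}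
    (hS1 : evalAt 1 S ≠ 0) (hS2 : evalAt (-1) S ≠ 0)
    (hPL : P.toLaurent = linearFactor 1 ^ L * linearFactor (-1) ^ K * S)
    (hPtL : Pt.toLaurent = linearFactor 1 ^ (2 * (L / 2)) * linearFactor (-1) ^ (2 * (K / 2)) * S)
    (hPt : IsEvenReciprocal Pt.toLaurent) (x : OA) :
    (∀ y, ⁅x, y⁆ ∈ IP P) ↔ Pt.toLaurent ∣ (x : Loop) 0 1 ∧ P.toLaurent ∣ (x : Loop) 0 0 := by
  have hPPt : P.toLaurent ∣ Pt.toLaurent * (linearFactor 1 * linearFactor (-1)) := by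
    rw [hPL, hPtL]; exact pow_mul_pow_mul_dvd_mul _ _ _ L K
  refine ⟨fun hx => ?_, fun ⟨hp, hq⟩ => lie_mem_IP_of_dvd hPt hPPt hp hq⟩
  obtain ⟨hA, hB, hq⟩ := dvd_of_forall_lie_mem_IP hx
  rw [hPL] at hA hB
  exact ⟨hPtL ▸ dvd_of_dvd_mul_T_sub_T_of_dvd_sub_invert hS1 hS2 hA hB, hq⟩

/-- **Lemma 2 of Date–Roan.**  Let `P(t) = (t-1)^L (t+1)^K P*(t)` be a reciprocal
polynomial with `P*(±1) ≠ 0`, and let `P̃(t) = (t-1)^{2⌊L/2⌋}(t+1)^{2⌊K/2⌋}P*(t)`.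
Then `Z(I_P)` consists of the elements `p(t)e + p(t⁻¹)f + q(t)h` of the Onsager
algebra with `P̃ | p` and `P | q`; consequently `I_P` is a closed ideal if and only if
the zero multiplicities `L`, `K` of `P` at `t = ±1` are both even. -/
theorem center_of_quotient_by_IP (L K : ℕ) (Pstar P Pt : Polynomial ℂ)
    (h1 : Pstar.eval 1 ≠ 0) (h2 : Pstar.eval (-1) ≠ 0)
    (hPdef : P = (Polynomial.X - 1) ^ L * (Polynomial.X + 1) ^ K * Pstar)
    (hPtdef : Pt = (Polynomial.X - 1) ^ (2 * (L / 2)) *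
      (Polynomial.X + 1) ^ (2 * (K / 2)) * Pstar)
    (hP : IsReciprocal P) :
    (∀ x : OA, (∀ y : OA, ⁅x, y⁆ ∈ IP P) ↔
        (Pt.toLaurent ∣ (x : Loop) 0 1 ∧ P.toLaurent ∣ (x : Loop) 0 0)) ∧
    ((∀ x : OA, (∀ y : OA, ⁅x, y⁆ ∈ IP P) → x ∈ IP P) ↔ (Even L ∧ Even K)) := by
  have hS1 : evalAt 1 Pstar.toLaurent ≠ 0 := by simpa using h1
  have hS2 : evalAt (-1) Pstar.toLaurent ≠ 0 := by simpa using h2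
  have hPL : P.toLaurent = linearFactor 1 ^ L * linearFactor (-1) ^ K * Pstar.toLaurent := by
    simp [hPdef, linearFactor]
  have hPtL : Pt.toLaurent = linearFactor 1 ^ (2 * (L / 2)) * linearFactor (-1) ^ (2 * (K / 2)) *
      Pstar.toLaurent := by
    simp [hPtdef, linearFactor]
  obtain ⟨c, k, hc⟩ := hP.exists_invert_eq
  rw [hPL] at hc
  have hPt : IsEvenReciprocal Pt.toLaurent :=
    hPtL ▸ isEvenReciprocal_of_invert_mul_eq hS1 hS2 hc (L / 2) (K / 2)
  have center := forall_lie_mem_IP_iff hS1 hS2 hPL hPtL hPt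
  refine ⟨center, fun hclosed => ?_, fun ⟨hL, hK⟩ x hx => ?_⟩
  · let x₀ : OA := ⟨elt Pt.toLaurent (inv Pt.toLaurent) 0, elt_mem _ _ (by simp)⟩
    have hx₀ : (x₀ : Loop) = elt Pt.toLaurent (inv Pt.toLaurent) 0 := rfl
    obtain ⟨hdvd, -, -⟩ := (mem_IP_iff_of_coe_eq_elt hx₀).1
      (hclosed x₀ ((center x₀).2 ⟨by simp [hx₀, elt_eq], by simp [hx₀, elt_eq]⟩))
    rw [hPL, hPtL] at hdvd
    exact even_and_even_of_dvd hS1 hS2 hdvd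
  · have hPt_eq : Pt = P := by
      rw [hPtdef, hPdef, Nat.two_mul_div_two_of_even hL, Nat.two_mul_div_two_of_even hK]
    obtain ⟨hp, hq⟩ := (center x).1 hx
    rw [hPt_eq] at hp hPt
    exact (mem_IP_iff_of_coe_eq_elt (coe_eq_elt_and_inv_eq_neg x).1).2
      ⟨hp, hPt.dvd_invert hp, hq⟩

end Onsager
end
end

section
/- For a ∈ ℂ*, a ≠ ±1, and L ≥ 1, the Taylor-expansion morphism s_{a,L} : OA → (ℂ[u]/u^Lℂ[u]) ⊗ sl₂ (expanding Laurent polynomial coefficients around t = a in the variable u = t − a, truncated at order L) is surjective with kernel I_{U_a(t)^L}; hence OA/I_{U_a^L} ≅ (ℂ[u]/u^Lℂ[u]) ⊗ sl₂. -/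
open LaurentPolynomial

noncomputable section

namespace Onsager

attribute [local instance 100] LieRing.ofAssociativeRing

/-- The truncated polynomial ring `ℂ[u]/u^L ℂ[u]`. -/
abbrev AL (L : ℕ) : Type := Polynomial ℂ ⧸ Ideal.span {(Polynomial.X : Polynomial ℂ) ^ L}

/-- The class of the variable `u` in `ℂ[u]/u^L`. -/
def uBar (L : ℕ) : AL L := Ideal.Quotient.mk _ Polynomial.X

lemma isUnit_a_add_uBar (a : ℂ) (ha : a ≠ 0) (L : ℕ) :
    IsUnit (algebraMap ℂ (AL L) a + uBar L) := by
  have hnil : IsNilpotent (uBar L) :=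
    ⟨L, by
      rw [uBar, ← map_pow]
      exact Ideal.Quotient.eq_zero_iff_mem.2 (Ideal.subset_span (Set.mem_singleton _))⟩
  have hu : IsUnit (algebraMap ℂ (AL L) a) := (IsUnit.mk0 a ha).map (algebraMap ℂ (AL L))
  exact hnil.isUnit_add_left_of_commute hu (Commute.all _ _)

/-- The Taylor-expansion morphism `s_{a,L} : ℂ[t,t⁻¹] → ℂ[u]/u^L` around `t = a`,
`u = t - a`: the unique `ℂ`-algebra map sending `t` to `a + u` (a unit of `ℂ[u]/u^L`).
Its value on `p(t)` is the truncation of `Σ_j p⁽ʲ⁾(a) uʲ/j!`. -/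
def sMap (a : ℂ) (ha : a ≠ 0) (L : ℕ) : R →ₐ[ℂ] AL L :=
  AddMonoidAlgebra.lift ℂ (AL L) ℤ
    ((Units.coeHom (AL L)).comp (zpowersHom (AL L)ˣ (isUnit_a_add_uBar a ha L).unit))

/-- `s_{a,L}` applied entrywise to the loop algebra. -/
def sL (a : ℂ) (ha : a ≠ 0) (L : ℕ) (x : Loop) : Matrix (Fin 2) (Fin 2) (AL L) :=
  x.map (sMap a ha L)

/-- `sl₂` with coefficients in a commutative `ℂ`-algebra `A`:
the Lie algebra of traceless 2×2 matrices over `A`, i.e. `A ⊗ sl₂`. -/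
def sl2A (A : Type*) [CommRing A] [Algebra ℂ A] :
    LieSubalgebra ℂ (Matrix (Fin 2) (Fin 2) A) where
  carrier := {x | Matrix.trace x = 0}
  add_mem' := by
    intro x y hx hy
    simp only [Set.mem_setOf_eq] at *
    simp [hx, hy]
  zero_mem' := by simp
  smul_mem' := by
    intro c x hx
    simp only [Set.mem_setOf_eq] at *
    simp [hx]
  lie_mem' := by
    intro x y hx hy
    simp only [Set.mem_setOf_eq] at *
    rw [Ring.lie_def]
    simp [Matrix.trace_mul_comm x y]

/-!
Write `A = (t - a)^L` and `B = (t - a⁻¹)^L`. Since `s_{a,L}` sends `t` to the unit `a + u` of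
`ℂ[u]/u^L`, its kernel on `ℂ[t,t⁻¹]` is the ideal generated by `A`, and as `t ↦ t⁻¹` carries `A`
to a unit multiple of `B`, `p(t⁻¹)` lies in that kernel iff `B ∣ p`. An element of `OA` has entries
`x_{ij} = x_{1-i,1-j}(t⁻¹)`, so all its entries die under `s_{a,L}` iff all of them are divisible
by both `A` and `B`; for `a ≠ ±1` these are coprime with product `U_a^L`. Coprimality also gives,
by the Chinese remainder theorem, a `p` with prescribed images of `p(t)` and `p(t⁻¹)`, which
yields every traceless matrix. The isomorphism is then the first isomorphism theorem.
-/

section LaurentDivisibility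

open Polynomial hiding C

variable {K : Type*}

theorem _root_.Polynomial.toLaurent_dvd_toLaurent_iff [CommRing K] {P q : K[X]}
    (hP : IsCoprime P X) :
    P.toLaurent ∣ q.toLaurent ↔ P ∣ q := by
  refine ⟨fun ⟨r, hr⟩ => ?_, map_dvd _⟩
  obtain ⟨m, s, hs⟩ := LaurentPolynomial.exists_T_pow r
  have hqs : q * X ^ m = P * s := toLaurent_injective <| by
    rw [map_mul, map_mul, toLaurent_X_pow, hs, hr, mul_assoc]
  exact (hP.pow_right (n := m)).dvd_of_dvd_mul_right ⟨s, hqs⟩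

theorem _root_.Polynomial.toLaurent_dvd_iff_of_toLaurent_eq [CommRing K] {P q : K[X]}
    {p : K[T;T⁻¹]} {n : ℕ} (hP : IsCoprime P X) (hq : q.toLaurent = p * T n) :
    P.toLaurent ∣ p ↔ P ∣ q := by
  rw [← toLaurent_dvd_toLaurent_iff hP, hq, (isUnit_T (n : ℤ)).dvd_mul_right]

theorem _root_.Polynomial.isCoprime_X_sub_C_X [Field K] {b : K} (hb : b ≠ 0) :
    IsCoprime (X - Polynomial.C b) X := by
  simpa using isCoprime_X_sub_C_of_isUnit_sub (a := b) (b := 0) (by simpa using hb.isUnit)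

theorem _root_.LaurentPolynomial.associated_invert_toLaurent_X_sub_C [Field K] {b : K}
    (hb : b ≠ 0) :
    Associated (invert (X - Polynomial.C b).toLaurent) (X - Polynomial.C b⁻¹).toLaurent := by
  have hC : C b * C b⁻¹ = (1 : K[T;T⁻¹]) := by rw [← map_mul, mul_inv_cancel₀ hb, map_one]
  have hT : T (-1) * T 1 = (1 : K[T;T⁻¹]) := by rw [← T_add]; simp
  have hu : IsUnit (-C b⁻¹ * T 1 : K[T;T⁻¹]) :=
    (IsUnit.of_mul_eq_one_right _ hC).neg.mul (isUnit_T 1)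
  refine ⟨hu.unit, ?_⟩
  simp only [IsUnit.unit_spec, map_sub, toLaurent_X, toLaurent_C, invert_T, invert_C]
  linear_combination (-C b⁻¹) * hT + T 1 * hC

theorem _root_.LaurentPolynomial.toLaurent_X_sub_C_pow_dvd_invert_iff [Field K] {b : K}
    (hb : b ≠ 0) (L : ℕ) (p : K[T;T⁻¹]) :
    ((X - Polynomial.C b) ^ L).toLaurent ∣ invert p ↔
      ((X - Polynomial.C b⁻¹) ^ L).toLaurent ∣ p := by
  rw [← map_dvd_iff invert, involutive_invert p, map_pow, map_pow, map_pow]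
  exact ((associated_invert_toLaurent_X_sub_C hb).pow_pow).dvd_iff_dvd_left

end LaurentDivisibility

section TaylorExpansion

open Polynomial hiding C

variable (a : ℂ) (ha : a ≠ 0) (L : ℕ)

theorem sMap_T (n : ℤ) :
    sMap a ha L (T n) = ((isUnit_a_add_uBar a ha L).unit ^ n : (AL L)ˣ) := by
  rw [sMap, T, AddMonoidAlgebra.lift_single, one_smul]
  rfl

theorem sMap_toLaurent (q : ℂ[X]) :
    sMap a ha L q.toLaurent = Ideal.Quotient.mk _ (q.comp (X + Polynomial.C a)) := by
  have hcomp : (sMap a ha L).comp toLaurentAlg =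
      (Ideal.Quotient.mkₐ ℂ _).comp (aeval (X + Polynomial.C a)) := by
    refine Polynomial.algHom_ext ?_
    rw [AlgHom.comp_apply, AlgHom.comp_apply, toLaurentAlg_apply, toLaurent_X, sMap_T, zpow_one,
      IsUnit.unit_spec, aeval_X, Ideal.Quotient.mkₐ_eq_mk, map_add, add_comm]
    rfl
  rw [← toLaurentAlg_apply, ← AlgHom.comp_apply, hcomp, AlgHom.comp_apply, ← comp_eq_aeval,
    Ideal.Quotient.mkₐ_eq_mk]

theorem sMap_surjective : Function.Surjective (sMap a ha L) := by
  intro y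
  obtain ⟨y₀, rfl⟩ := Ideal.Quotient.mk_surjective y
  refine ⟨(y₀.comp (X - Polynomial.C a)).toLaurent, ?_⟩
  rw [sMap_toLaurent, comp_assoc, sub_comp, X_comp, C_comp, add_sub_cancel_right, comp_X]

theorem sMap_eq_zero_iff (p : R) :
    sMap a ha L p = 0 ↔ ((X - Polynomial.C a) ^ L).toLaurent ∣ p := by
  obtain ⟨n, q, hq⟩ := exists_T_pow p
  have hunit : IsUnit (sMap a ha L (T n)) := by
    rw [sMap_T]
    exact Units.isUnit _
  rw [toLaurent_dvd_iff_of_toLaurent_eq ((isCoprime_X_sub_C_X ha).pow_left) hq,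
    X_sub_C_pow_dvd_iff, ← Ideal.mem_span_singleton, ← Ideal.Quotient.eq_zero_iff_mem,
    ← sMap_toLaurent, hq, map_mul, hunit.mul_left_eq_zero]

theorem sMap_invert_eq_zero_iff (p : R) :
    sMap a ha L (inv p) = 0 ↔ ((X - Polynomial.C a⁻¹) ^ L).toLaurent ∣ p := by
  rw [sMap_eq_zero_iff, toLaurent_X_sub_C_pow_dvd_invert_iff ha]

end TaylorExpansion

section Kernel

open Polynomial hiding C

variable (a : ℂ) (ha0 : a ≠ 0) (ha1 : a ≠ 1) (ha2 : a ≠ -1) (L : ℕ)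

include ha0 ha1 ha2 in
theorem U_eq_mul : U a = (X - Polynomial.C a) * (X - Polynomial.C a⁻¹) := by
  rw [U, if_neg (by tauto), Polynomial.C_add]
  have hC : Polynomial.C a * Polynomial.C a⁻¹ = 1 := by
    rw [← Polynomial.C_mul, mul_inv_cancel₀ ha0, Polynomial.C_1]
  linear_combination -hC

include ha0 ha1 ha2 in
theorem isCoprime_X_sub_C_pow_X_sub_C_inv_pow :
    IsCoprime ((X - Polynomial.C a) ^ L) ((X - Polynomial.C a⁻¹) ^ L) := by
  have hne : a ≠ a⁻¹ := by
    rw [Ne, self_eq_inv₀]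
    tauto
  exact (isCoprime_X_sub_C_of_isUnit_sub (sub_ne_zero.2 hne).isUnit).pow

include ha0 ha1 ha2 in
theorem toLaurent_U_pow_dvd_iff (p : R) :
    (U a ^ L).toLaurent ∣ p ↔
      ((X - Polynomial.C a) ^ L).toLaurent ∣ p ∧
        ((X - Polynomial.C a⁻¹) ^ L).toLaurent ∣ p := by
  rw [U_eq_mul a ha0 ha1 ha2, mul_pow, map_mul]
  refine ⟨fun h => ⟨dvd_of_mul_right_dvd h, dvd_of_mul_left_dvd h⟩, fun ⟨h₁, h₂⟩ => ?_⟩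
  exact ((isCoprime_X_sub_C_pow_X_sub_C_inv_pow a ha0 ha1 ha2 L).map toLaurent).mul_dvd h₁ h₂

theorem thetaHat_apply (M : Loop) (i j : Fin 2) : thetaHat M i j = inv (M (1 - i) (1 - j)) := by
  fin_cases i <;> fin_cases j <;>
    simp [thetaHat, Sw, Matrix.mul_apply, Matrix.vecMul, dotProduct, Fin.sum_univ_two]

theorem OA_apply_eq_invert (x : OA) (i j : Fin 2) :
    (x : Loop) i j = inv ((x : Loop) (1 - i) (1 - j)) := by
  rw [← thetaHat_apply, x.2.1]

include ha1 ha2 in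
theorem sL_eq_zero_iff_mem_IP (x : OA) : sL a ha0 L x = 0 ↔ x ∈ IP (U a ^ L) := by
  have hinv : ∀ i j, ((X - Polynomial.C a⁻¹) ^ L).toLaurent ∣ (x : Loop) i j ↔
      sMap a ha0 L ((x : Loop) (1 - i) (1 - j)) = 0 := fun i j => by
    rw [← sMap_invert_eq_zero_iff, OA_apply_eq_invert x (1 - i), sub_sub_cancel, sub_sub_cancel]
  change _ ↔ ∀ i j, (U a ^ L).toLaurent ∣ (x : Loop) i j
  simp only [← Matrix.ext_iff, sL, Matrix.map_apply, Matrix.zero_apply,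
    toLaurent_U_pow_dvd_iff a ha0 ha1 ha2, ← sMap_eq_zero_iff a ha0 L, hinv]
  exact ⟨fun h i j => ⟨h i j, h _ _⟩, fun h i j => (h i j).1⟩

end Kernel

section Surjectivity

open Polynomial hiding C

variable (a : ℂ) (ha0 : a ≠ 0) (ha1 : a ≠ 1) (ha2 : a ≠ -1) (L : ℕ)

include ha1 ha2 in
theorem exists_sMap_eq_one_sMap_invert_eq_zero :
    ∃ g : R, sMap a ha0 L g = 1 ∧ sMap a ha0 L (inv g) = 0 := by
  obtain ⟨c, d, hcd⟩ := isCoprime_X_sub_C_pow_X_sub_C_inv_pow a ha0 ha1 ha2 L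
  refine ⟨(d * (X - Polynomial.C a⁻¹) ^ L).toLaurent, ?_, ?_⟩
  · have hA : sMap a ha0 L ((X - Polynomial.C a) ^ L).toLaurent = 0 :=
      (sMap_eq_zero_iff a ha0 L _).2 dvd_rfl
    have h := congrArg (fun q : ℂ[X] => sMap a ha0 L q.toLaurent) hcd
    simpa only [map_add, map_mul, hA, mul_zero, zero_add, map_one] using h
  · exact (sMap_invert_eq_zero_iff a ha0 L _).2 (map_dvd _ (dvd_mul_left _ _))

include ha1 ha2 in
/-- The Chinese remainder theorem for the coprime ideals `((t - a)^L)` and `((t - a⁻¹)^L)`. -/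
theorem exists_sMap_eq_sMap_invert_eq (y z : AL L) :
    ∃ p : R, sMap a ha0 L p = y ∧ sMap a ha0 L (inv p) = z := by
  obtain ⟨g, hg, hg'⟩ := exists_sMap_eq_one_sMap_invert_eq_zero a ha0 ha1 ha2 L
  obtain ⟨y₁, rfl⟩ := sMap_surjective a ha0 L y
  obtain ⟨z₁, rfl⟩ := sMap_surjective a ha0 L z
  refine ⟨y₁ * g + inv (z₁ * g), ?_, ?_⟩
  · simp only [map_add, map_mul, hg, hg', mul_one, mul_zero, add_zero]
  · simp only [map_add, map_mul, involutive_invert _, hg, hg', mul_one, mul_zero, zero_add]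

theorem trace_sL (x : Loop) : (sL a ha0 L x).trace = sMap a ha0 L x.trace :=
  (AddMonoidHom.map_trace (sMap a ha0 L) x).symm

include ha1 ha2 in
theorem range_sL : Set.range (fun x : OA => sL a ha0 L x) =
    {x : Matrix (Fin 2) (Fin 2) (AL L) | x.trace = 0} := by
  refine Set.Subset.antisymm ?_ fun M hM => ?_
  · rintro _ ⟨x, rfl⟩
    change (sL a ha0 L x).trace = 0
    rw [trace_sL, x.2.2, map_zero]
  have hM11 : M 1 1 = -M 0 0 :=
    eq_neg_of_add_eq_zero_right (by simpa [Matrix.trace_fin_two] using hM)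
  obtain ⟨p, hp, hp'⟩ := exists_sMap_eq_sMap_invert_eq a ha0 ha1 ha2 L (M 0 1) (M 1 0)
  obtain ⟨s, hs, hs'⟩ := exists_sMap_eq_sMap_invert_eq a ha0 ha1 ha2 L (M 0 0) (-M 0 0)
  set r : R := (2⁻¹ : ℂ) • (s - inv s)
  have hr : inv r = -r := by
    rw [map_smul, map_sub, involutive_invert, ← smul_neg, neg_sub]
  have hsr : sMap a ha0 L r = M 0 0 := by
    rw [map_smul, map_sub, hs, hs', sub_neg_eq_add, ← two_smul ℂ, smul_smul,
      inv_mul_cancel₀ two_ne_zero, one_smul]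
  refine ⟨⟨elt p (inv p) r, elt_mem p r hr⟩, ?_⟩
  ext i j
  fin_cases i <;> fin_cases j <;> simp [sL, elt_eq, hp, hp', hsr, hM11]

end Surjectivity

def sLHom (a : ℂ) (ha : a ≠ 0) (L : ℕ) : OA →ₗ⁅ℂ⁆ Matrix (Fin 2) (Fin 2) (AL L) :=
  (sMap a ha L).mapMatrix.toLieHom.comp OASub.incl

theorem sL_kernel_image_iso_general (a : ℂ) (ha0 : a ≠ 0) (ha1 : a ≠ 1) (ha2 : a ≠ -1)
    (L : ℕ) :
    (∀ X : OA, sL a ha0 L (X : Loop) = 0 ↔ X ∈ IP (U a ^ L)) ∧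
    Set.range (fun X : OA => sL a ha0 L (X : Loop)) =
      {x : Matrix (Fin 2) (Fin 2) (AL L) | Matrix.trace x = 0} ∧
    Nonempty ((OA ⧸ IP (U a ^ L)) ≃ₗ⁅ℂ⁆ ↥(sl2A (AL L))) := by
  have hker : (sLHom a ha0 L).ker = IP (U a ^ L) := by
    ext x
    exact LieHom.mem_ker.trans (sL_eq_zero_iff_mem_IP a ha0 ha1 ha2 L x)
  have hrange : ((sLHom a ha0 L).range : Set (Matrix (Fin 2) (Fin 2) (AL L))) = sl2A (AL L) :=
    (LieHom.coe_range _).trans (range_sL a ha0 ha1 ha2 L)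
  refine ⟨sL_eq_zero_iff_mem_IP a ha0 ha1 ha2 L, range_sL a ha0 ha1 ha2 L, ?_⟩
  rw [← hker]
  exact ⟨(sLHom a ha0 L).quotKerEquivRange.trans (LieEquiv.ofEq _ _ hrange)⟩

/-- **Proposition 1 and Theorem 3 of Date–Roan.**  For `a ≠ 0, ±1` and `L ≥ 1` the
morphism `s_{a,L} : OA → (ℂ[u]/u^L) ⊗ sl₂` has kernel `I_{U_a^L}` and is surjective
onto the traceless matrices; hence `OA/I_{U_a^L} ≅ (ℂ[u]/u^L ℂ[u]) ⊗ sl₂`. -/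
theorem sL_kernel_image_iso (a : ℂ) (ha0 : a ≠ 0) (ha1 : a ≠ 1) (ha2 : a ≠ -1)
    (L : ℕ) (hL : 1 ≤ L) :
    (∀ X : OA, sL a ha0 L (X : Loop) = 0 ↔ X ∈ IP (U a ^ L)) ∧
    Set.range (fun X : OA => sL a ha0 L (X : Loop)) =
      {x : Matrix (Fin 2) (Fin 2) (AL L) | Matrix.trace x = 0} ∧
    Nonempty ((OA ⧸ IP (U a ^ L)) ≃ₗ⁅ℂ⁆ ↥(sl2A (AL L))) :=
  sL_kernel_image_iso_general a ha0 ha1 ha2 L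

end Onsager
end
end

section
/- The Stirling-number identity C(j+k, k) S(j, a) = Σ_l C(a+l, l) s(l, k) S(j+k, a+l) holds for all nonnegative integers j, k, a, where s and S denote Stirling numbers of the first and second kind and C denotes binomial coefficients. -/
/-- Stirling numbers of the second kind `S(n,k)`: `x^n = Σ_k S(n,k) x⁽ᵏ⁾`. -/
def S2 : ℕ → ℕ → ℕ
  | 0, 0 => 1
  | 0, _ + 1 => 0
  | _ + 1, 0 => 0
  | n + 1, k + 1 => (k + 1) * S2 n (k + 1) + S2 n k

/-- Signed Stirling numbers of the first kind `s(n,k)`: `x⁽ⁿ⁾ = Σ_k s(n,k) x^k`. -/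
def s1 : ℕ → ℕ → ℤ
  | 0, 0 => 1
  | 0, _ + 1 => 0
  | n + 1, 0 => -(n : ℤ) * s1 n 0
  | n + 1, k + 1 => s1 n k - (n : ℤ) * s1 n (k + 1)

open Finset

/-- Finite-difference operator on rational sequences. -/
def dlt (f : ℕ → ℚ) : ℕ → ℚ := fun x => f (x + 1) - f x

lemma S2_zero_of_lt : ∀ n k : ℕ, n < k → S2 n k = 0 := by
  intro n
  induction n with
  | zero =>
    intro k h
    match k, h with
    | k + 1, _ => rfl
  | succ n ih =>
    intro k h
    match k, h with
    | k + 1, h =>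
      show (k + 1) * S2 n (k + 1) + S2 n k = 0
      rw [ih k (by omega), ih (k + 1) (by omega)]
      ring

lemma stirling_inv (p : ℕ) : ∀ k : ℕ,
    ∑ l ∈ range (p + 1), (s1 l k : ℚ) * (S2 p l : ℚ) = if p = k then 1 else 0 := by
  induction p with
  | zero =>
    intro k
    cases k <;> simp [s1, S2]
  | succ p ih =>
    intro k
    rw [Finset.sum_range_succ']
    have h0 : S2 (p + 1) 0 = 0 := rfl
    rw [h0]
    simp only [Nat.cast_zero, mul_zero, add_zero]
    have hS : ∀ m : ℕ, (S2 (p + 1) (m + 1) : ℚ)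
        = (m + 1) * S2 p (m + 1) + S2 p m := by
      intro m
      show ((((m + 1) * S2 p (m + 1) + S2 p m : ℕ)) : ℚ) = _
      push_cast
      ring
    set G : ℚ := ∑ m ∈ range (p + 1), (m : ℚ) * (s1 m k : ℚ) * (S2 p m : ℚ) with hG
    have hfirst : ∑ m ∈ range (p + 1),
        (s1 (m + 1) k : ℚ) * ((m + 1) * (S2 p (m + 1) : ℚ)) = G := by
      have e1 : ∀ m ∈ range (p + 1), (s1 (m + 1) k : ℚ) * ((m + 1) * (S2 p (m + 1) : ℚ))
          = (fun l : ℕ => (l : ℚ) * (s1 l k : ℚ) * (S2 p l : ℚ)) (m + 1) := by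
        intro m _
        push_cast
        ring
      rw [Finset.sum_congr rfl e1]
      have e2 := Finset.sum_range_succ' (fun l : ℕ => (l : ℚ) * (s1 l k : ℚ) * (S2 p l : ℚ)) (p + 1)
      have e3 := Finset.sum_range_succ (fun l : ℕ => (l : ℚ) * (s1 l k : ℚ) * (S2 p l : ℚ)) (p + 1)
      rw [e3] at e2
      have e4 : ((p + 1 : ℕ) : ℚ) * (s1 (p + 1) k : ℚ) * (S2 p (p + 1) : ℚ) = 0 := by
        rw [S2_zero_of_lt p (p + 1) (by omega)]
        simp
      rw [e4] at e2
      simp only [Nat.cast_zero, zero_mul, add_zero] at e2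
      linarith [e2]
    have hsplit : ∑ m ∈ range (p + 1), (s1 (m + 1) k : ℚ) * (S2 (p + 1) (m + 1) : ℚ)
        = (∑ m ∈ range (p + 1), (s1 (m + 1) k : ℚ) * ((m + 1) * (S2 p (m + 1) : ℚ)))
          + ∑ m ∈ range (p + 1), (s1 (m + 1) k : ℚ) * (S2 p m : ℚ) := by
      rw [← Finset.sum_add_distrib]
      apply Finset.sum_congr rfl
      intro m _
      rw [hS m]
      ring
    rw [hsplit, hfirst]
    cases k with
    | zero =>
      have e5 : ∀ m ∈ range (p + 1), (s1 (m + 1) 0 : ℚ) * (S2 p m : ℚ)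
          = -((m : ℚ) * (s1 m 0 : ℚ) * (S2 p m : ℚ)) := by
        intro m _
        have : s1 (m + 1) 0 = -(m : ℤ) * s1 m 0 := rfl
        rw [this]
        push_cast
        ring
      rw [Finset.sum_congr rfl e5, Finset.sum_neg_distrib]
      simp only [← hG]
      simp
    | succ q =>
      have e5 : ∀ m ∈ range (p + 1), (s1 (m + 1) (q + 1) : ℚ) * (S2 p m : ℚ)
          = (s1 m q : ℚ) * (S2 p m : ℚ) - (m : ℚ) * (s1 m (q + 1) : ℚ) * (S2 p m : ℚ) := by
        intro m _
        have : s1 (m + 1) (q + 1) = s1 m q - (m : ℤ) * s1 m (q + 1) := rfl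
        rw [this]
        push_cast
        ring
      rw [Finset.sum_congr rfl e5, Finset.sum_sub_distrib, ih q]
      have : (∑ m ∈ range (p + 1), (m : ℚ) * (s1 m (q + 1) : ℚ) * (S2 p m : ℚ)) = G := hG.symm
      rw [this]
      by_cases h : p = q <;> simp [h]

lemma dlt_iter_add (f g : ℕ → ℚ) : ∀ (m : ℕ) (y : ℕ),
    dlt^[m] (fun x => f x + g x) y = dlt^[m] f y + dlt^[m] g y := by
  intro m
  induction m generalizing f g with
  | zero => intro y; simp
  | succ m ih =>
    intro y
    rw [Function.iterate_succ_apply, Function.iterate_succ_apply,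
      Function.iterate_succ_apply]
    have : dlt (fun x => f x + g x) = fun x => dlt f x + dlt g x := by
      funext x
      simp [dlt]
      ring
    rw [this, ih (dlt f) (dlt g)]

lemma dlt_iter_sum {ι : Type} (s : Finset ι) (c : ι → ℚ) (F : ι → ℕ → ℚ) :
    ∀ (m : ℕ) (y : ℕ),
    dlt^[m] (fun x => ∑ p ∈ s, c p * F p x) y = ∑ p ∈ s, c p * dlt^[m] (F p) y := by
  intro m
  induction m generalizing F with
  | zero => intro y; simp
  | succ m ih =>
    intro y
    rw [Function.iterate_succ_apply]
    have : dlt (fun x => ∑ p ∈ s, c p * F p x) = fun x => ∑ p ∈ s, c p * dlt (F p) x := by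
      funext x
      simp only [dlt, ← Finset.sum_sub_distrib]
      apply Finset.sum_congr rfl
      intro p _
      ring
    rw [this, ih (fun p => dlt (F p))]
    apply Finset.sum_congr rfl
    intro p _
    rw [Function.iterate_succ_apply]

lemma dlt_iter_smul (c : ℚ) (F : ℕ → ℚ) : ∀ (m : ℕ) (y : ℕ),
    dlt^[m] (fun x => c * F x) y = c * dlt^[m] F y := by
  intro m
  induction m generalizing F with
  | zero => intro y; simp
  | succ m ih =>
    intro y
    rw [Function.iterate_succ_apply, Function.iterate_succ_apply]
    have : dlt (fun x => c * F x) = fun x => c * dlt F x := by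
      funext x
      simp [dlt]
      ring
    rw [this, ih (dlt F)]

lemma dlt_iter_shift (f : ℕ → ℚ) (x : ℕ) : ∀ (m : ℕ) (z : ℕ),
    dlt^[m] (fun y => f (x + y)) z = dlt^[m] f (x + z) := by
  intro m
  induction m generalizing f with
  | zero => intro z; simp
  | succ m ih =>
    intro z
    rw [Function.iterate_succ_apply, Function.iterate_succ_apply]
    have : dlt (fun y => f (x + y)) = fun y => dlt f (x + y) := by
      funext y
      simp [dlt, add_assoc]
    rw [this, ih (dlt f)]

lemma dlt_iter_id_mul (g : ℕ → ℚ) : ∀ (m : ℕ) (y : ℕ),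
    dlt^[m + 1] (fun x => (x : ℚ) * g x) y
      = (y : ℚ) * dlt^[m + 1] g y + (m + 1) * dlt^[m] (fun x => g (x + 1)) y := by
  intro m
  induction m generalizing g with
  | zero =>
    intro y
    simp only [Function.iterate_one, Function.iterate_zero, id_eq]
    simp [dlt]
    push_cast
    ring
  | succ m ih =>
    intro y
    rw [Function.iterate_succ_apply]
    have h1 : dlt (fun x => (x : ℚ) * g x) = fun x : ℕ => (x : ℚ) * dlt g x + g (x + 1) := by
      funext x
      simp [dlt]
      push_cast
      ring
    rw [h1, dlt_iter_add, ih (dlt g)]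
    have h2 : dlt^[m] (fun x => dlt g (x + 1)) y = dlt^[m + 1] (fun x => g (x + 1)) y := by
      rw [Function.iterate_succ_apply]
      rfl
    rw [h2]
    have h3 : dlt^[m + 1] (dlt g) y = dlt^[m + 1 + 1] g y := by
      rw [Function.iterate_succ_apply dlt (m + 1) g]
    rw [h3]
    push_cast
    ring

lemma dlt_iter_pow (n : ℕ) : ∀ a : ℕ,
    dlt^[a] (fun x => (x : ℚ) ^ n) 0 = (Nat.factorial a : ℚ) * (S2 n a : ℚ) := by
  induction n with
  | zero =>
    intro a
    cases a with
    | zero => simp [S2]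
    | succ a =>
      rw [Function.iterate_succ_apply]
      have h1 : dlt (fun x : ℕ => (x : ℚ) ^ 0) = fun _ => (0 : ℚ) := by
        funext x
        simp [dlt]
      rw [h1]
      have h2 : dlt^[a] (fun _ : ℕ => (0 : ℚ)) = fun _ => (0 : ℚ) := by
        apply Function.iterate_fixed
        funext x
        simp [dlt]
      rw [h2]
      have : S2 0 (a + 1) = 0 := rfl
      rw [this]
      simp
  | succ n ih =>
    intro a
    cases a with
    | zero =>
      simp only [Function.iterate_zero, id_eq]
      have : S2 (n + 1) 0 = 0 := rfl
      rw [this]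
      simp
    | succ a =>
      have h1 : (fun x : ℕ => (x : ℚ) ^ (n + 1)) = fun x : ℕ => (x : ℚ) * (x : ℚ) ^ n := by
        funext x
        ring
      rw [h1, dlt_iter_id_mul]
      have h2 : dlt^[a] (fun x : ℕ => ((x + 1 : ℕ) : ℚ) ^ n) 0
          = dlt^[a] (fun x : ℕ => (x : ℚ) ^ n) 0 + dlt^[a + 1] (fun x : ℕ => (x : ℚ) ^ n) 0 := by
        have e : (fun x : ℕ => ((x + 1 : ℕ) : ℚ) ^ n)
            = fun x : ℕ => (x : ℚ) ^ n + dlt (fun x : ℕ => (x : ℚ) ^ n) x := by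
          funext x
          simp only [dlt]
          ring
        rw [e, dlt_iter_add, Function.iterate_succ_apply]
      rw [h2, ih a, ih (a + 1)]
      have hS : (S2 (n + 1) (a + 1) : ℚ) = (a + 1) * (S2 n (a + 1) : ℚ) + (S2 n a : ℚ) := by
        show ((((a + 1) * S2 n (a + 1) + S2 n a : ℕ)) : ℚ) = _
        push_cast
        ring
      rw [hS]
      rw [Nat.factorial_succ]
      push_cast
      ring

lemma dlt_iter_pow_expand (n l x : ℕ) :
    dlt^[l] (fun y : ℕ => (y : ℚ) ^ n) x
      = ∑ p ∈ range (n + 1),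
          ((x : ℚ) ^ (n - p) * (Nat.choose n p : ℚ)) * ((Nat.factorial l : ℚ) * (S2 p l : ℚ)) := by
  have h0 : dlt^[l] (fun y : ℕ => (y : ℚ) ^ n) x
      = dlt^[l] (fun y : ℕ => ((x + y : ℕ) : ℚ) ^ n) 0 := by
    rw [dlt_iter_shift (fun y : ℕ => (y : ℚ) ^ n) x l 0, add_zero]
  rw [h0]
  have h1 : (fun y : ℕ => ((x + y : ℕ) : ℚ) ^ n)
      = fun y : ℕ => ∑ p ∈ range (n + 1),
          ((x : ℚ) ^ (n - p) * (Nat.choose n p : ℚ)) * (y : ℚ) ^ p := by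
    funext y
    push_cast
    rw [add_comm (x : ℚ) (y : ℚ), add_pow]
    apply Finset.sum_congr rfl
    intro p _
    ring
  rw [h1, dlt_iter_sum (range (n + 1)) (fun p => (x : ℚ) ^ (n - p) * (Nat.choose n p : ℚ))
    (fun p => fun y : ℕ => (y : ℚ) ^ p) l 0]
  apply Finset.sum_congr rfl
  intro p _
  rw [dlt_iter_pow p l]

lemma key_identity (n k : ℕ) (hk : k ≤ n) (x : ℕ) :
    ∑ l ∈ range (n + 1), (s1 l k : ℚ) / (Nat.factorial l : ℚ)
        * dlt^[l] (fun y : ℕ => (y : ℚ) ^ n) x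
      = (Nat.choose n k : ℚ) * (x : ℚ) ^ (n - k) := by
  have h1 : ∀ l ∈ range (n + 1), (s1 l k : ℚ) / (Nat.factorial l : ℚ)
        * dlt^[l] (fun y : ℕ => (y : ℚ) ^ n) x
      = ∑ p ∈ range (n + 1),
          ((x : ℚ) ^ (n - p) * (Nat.choose n p : ℚ)) * ((s1 l k : ℚ) * (S2 p l : ℚ)) := by
    intro l _
    rw [dlt_iter_pow_expand, Finset.mul_sum]
    apply Finset.sum_congr rfl
    intro p _
    have : (Nat.factorial l : ℚ) ≠ 0 := Nat.cast_ne_zero.mpr (Nat.factorial_ne_zero l)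
    field_simp
  rw [Finset.sum_congr rfl h1, Finset.sum_comm]
  have h2 : ∀ p ∈ range (n + 1),
      (∑ l ∈ range (n + 1), ((x : ℚ) ^ (n - p) * (Nat.choose n p : ℚ))
          * ((s1 l k : ℚ) * (S2 p l : ℚ)))
        = ((x : ℚ) ^ (n - p) * (Nat.choose n p : ℚ)) * (if p = k then 1 else 0) := by
    intro p hp
    rw [← Finset.mul_sum]
    congr 1
    rw [← stirling_inv p k]
    apply (Finset.sum_subset _ _).symm
    · intro t ht
      simp only [Finset.mem_range] at *
      omega
    · intro t ht hnt
      simp only [Finset.mem_range] at *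
      rw [S2_zero_of_lt p t (by omega)]
      simp
  rw [Finset.sum_congr rfl h2]
  have h3 : (∑ p ∈ range (n + 1), (x : ℚ) ^ (n - p) * (Nat.choose n p : ℚ)
        * if p = k then (1 : ℚ) else 0)
      = ∑ p ∈ range (n + 1),
          if p = k then (x : ℚ) ^ (n - k) * (Nat.choose n k : ℚ) else 0 := by
    apply Finset.sum_congr rfl
    intro p _
    by_cases h : p = k <;> simp [h]
  rw [h3, Finset.sum_ite_eq' (range (n + 1)) k
    (fun _ => (x : ℚ) ^ (n - k) * (Nat.choose n k : ℚ))]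
  have : k ∈ range (n + 1) := Finset.mem_range.mpr (by omega)
  rw [if_pos this]
  ring

open Finset in
/-- **Lemma 7 of Date–Roan, second identity.**
`C(j+k,k) S(j,a) = Σ_l C(a+l,l) s(l,k) S(j+k,a+l)` (the sum over `l` is finite since
`s(l,k) = 0` for `k > l` and `S(j+k,a+l) = 0` for `a+l > j+k`). -/
theorem stirling_binomial_identity (j k a : ℕ) :
    (Nat.choose (j + k) k : ℚ) * (S2 j a : ℚ) =
      ∑ l ∈ range (j + k + 1),
        (Nat.choose (a + l) l : ℚ) * (s1 l k : ℚ) * (S2 (j + k) (a + l) : ℚ) := by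
  have hfa : (Nat.factorial a : ℚ) ≠ 0 := Nat.cast_ne_zero.mpr (Nat.factorial_ne_zero a)
  have hterm : ∀ l ∈ range (j + k + 1),
      (Nat.choose (a + l) l : ℚ) * (s1 l k : ℚ) * (S2 (j + k) (a + l) : ℚ)
        = (1 / (Nat.factorial a : ℚ)) * ((s1 l k : ℚ) / (Nat.factorial l : ℚ)
            * dlt^[a] (dlt^[l] (fun y : ℕ => (y : ℚ) ^ (j + k))) 0) := by
    intro l _
    have hfl : (Nat.factorial l : ℚ) ≠ 0 := Nat.cast_ne_zero.mpr (Nat.factorial_ne_zero l)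
    have hP6 : dlt^[a + l] (fun y : ℕ => (y : ℚ) ^ (j + k)) 0
        = (Nat.factorial (a + l) : ℚ) * (S2 (j + k) (a + l) : ℚ) := dlt_iter_pow _ _
    have hcomp : dlt^[a] (dlt^[l] (fun y : ℕ => (y : ℚ) ^ (j + k))) 0
        = (Nat.factorial (a + l) : ℚ) * (S2 (j + k) (a + l) : ℚ) := by
      rw [← Function.iterate_add_apply, hP6]
    rw [hcomp]
    have hfac : (Nat.choose (a + l) l : ℚ) * (Nat.factorial l : ℚ) * (Nat.factorial a : ℚ)
        = (Nat.factorial (a + l) : ℚ) := by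
      have h := Nat.choose_mul_factorial_mul_factorial (Nat.le_add_left l a)
      rw [Nat.add_sub_cancel] at h
      exact_mod_cast congrArg (fun t : ℕ => (t : ℚ)) h
    field_simp
    linear_combination (s1 l k : ℚ) * (S2 (j + k) (a + l) : ℚ) * hfac
  rw [Finset.sum_congr rfl hterm, ← Finset.mul_sum]
  rw [← dlt_iter_sum (range (j + k + 1))
    (fun l => (s1 l k : ℚ) / (Nat.factorial l : ℚ))
    (fun l => dlt^[l] (fun y : ℕ => (y : ℚ) ^ (j + k))) a 0]
  have hkey : (fun x : ℕ => ∑ l ∈ range (j + k + 1),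
        (s1 l k : ℚ) / (Nat.factorial l : ℚ) * dlt^[l] (fun y : ℕ => (y : ℚ) ^ (j + k)) x)
      = fun x : ℕ => (Nat.choose (j + k) k : ℚ) * (x : ℚ) ^ j := by
    funext x
    rw [key_identity (j + k) k (Nat.le_add_left k j) x, Nat.add_sub_cancel]
  rw [hkey, dlt_iter_smul ((Nat.choose (j + k) k : ℚ)) (fun x : ℕ => (x : ℚ) ^ j) a 0,
    dlt_iter_pow j a]
  field_simp
end

section
/- Inversion lemma: if sequences (a_k), (b_k) satisfy a_{2n+1} = Σ_{k=0}^n C(2n+2, 2k+1) b_{2n+1−2k} for all n ≥ 0, then (2n+2) b_{2n+1} = Σ_{k=0}^n C(2n+2, 2k) d_{2k} a_{2n+1−2k}, where the numbers d_{2j} are defined by the expansion 2x/(e^x − e^{−x}) = Σ_{j≥0} d_{2j} x^{2j}/(2j)!. -/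
/-
Comparing the coefficients of `x^(2m+1)` in `2x = (eˣ - e⁻ˣ) · Σ d_{2j} x^(2j)/(2j)!` gives
`Σ_{k ≤ m} C(2m+1, 2k) d_{2k} = [m = 0]`. Substituting the hypothesis into the right-hand side
and using `C(2n+2, 2k) C(2n+2-2k, 2j+1) = C(2n+2, 2m+1) C(2m+1, 2k)` for `m = k + j`, the
order of summation can be exchanged to give
`Σ_{m ≤ n} C(2n+2, 2m+1) b_{2n+1-2m} Σ_{k ≤ m} C(2m+1, 2k) d_{2k}`, of which only the term
`m = 0`, namely `(2n+2) b_{2n+1}`, survives.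
-/

open Finset PowerSeries
open scoped Nat

theorem Finset.sum_range_two_mul {M : Type*} [AddCommMonoid M] (f : ℕ → M) (m : ℕ) :
    ∑ i ∈ range (2 * m), f i = ∑ j ∈ range m, (f (2 * j) + f (2 * j + 1)) := by
  induction m with
  | zero => simp
  | succ m ih =>
    rw [Nat.mul_succ, sum_range_succ, sum_range_succ, sum_range_succ, ih, add_assoc]

theorem coeff_exp_sub_rescale_neg_one (n : ℕ) :
    coeff n (exp ℚ - rescale (-1) (exp ℚ)) = (1 - (-1) ^ n) / n ! := by
  simp only [map_sub, coeff_rescale, coeff_exp, Algebra.algebraMap_self_apply]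
  ring

theorem sum_choose_mul_eq_ite_of_two_mul_X_eq {d : ℕ → ℚ}
    (hd : (2 : ℚ⟦X⟧) * X = (exp ℚ - rescale (-1) (exp ℚ)) *
      PowerSeries.mk (fun n => if n % 2 = 0 then d (n / 2) / n ! else 0)) (m : ℕ) :
    ∑ k ∈ range (m + 1), ((2 * m + 1).choose (2 * k) : ℚ) * d k = if m = 0 then 1 else 0 := by
  set S := exp ℚ - rescale (-1) (exp ℚ)
  set D := PowerSeries.mk (fun n => if n % 2 = 0 then d (n / 2) / n ! else 0)
  have hcoeff := congrArg (coeff (2 * m + 1)) hd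
  rw [← map_ofNat C 2, coeff_C_mul, coeff_X, mul_comm S, coeff_mul,
    Nat.sum_antidiagonal_eq_sum_range_succ (fun i j => coeff i D * coeff j S),
    show (2 * m + 1).succ = 2 * (m + 1) by omega, sum_range_two_mul] at hcoeff
  have hterm : ∀ k ∈ range (m + 1),
      coeff (2 * k) D * coeff (2 * m + 1 - 2 * k) S +
        coeff (2 * k + 1) D * coeff (2 * m + 1 - (2 * k + 1)) S =
      2 / (2 * m + 1)! * (((2 * m + 1).choose (2 * k) : ℚ) * d k) := by
    intro k hk
    have hkm : 2 * k ≤ 2 * m + 1 := by grind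
    have hodd : Odd (2 * m + 1 - 2 * k) := by grind
    have hD_even : coeff (2 * k) D = d k / (2 * k)! := by simp [D]
    have hD_odd : coeff (2 * k + 1) D = 0 := by simp [D, Nat.add_mod]
    rw [hD_even, hD_odd, zero_mul, add_zero, coeff_exp_sub_rescale_neg_one, hodd.neg_one_pow,
      Nat.cast_choose ℚ hkm]
    field_simp
    ring
  rw [sum_congr rfl hterm, ← mul_sum] at hcoeff
  simp only [Nat.add_eq_right, mul_eq_zero, OfNat.ofNat_ne_zero, false_or] at hcoeff
  field_simp at hcoeff
  rw [← hcoeff]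
  split_ifs with hm <;> simp [hm]

section
variable {R : Type*} [CommRing R] {a b : ℕ → R}

theorem choose_mul_eq_sum_Ico_of_eq_sum
    (hab : ∀ n, a (2 * n + 1) =
      ∑ k ∈ range (n + 1), ((2 * n + 2).choose (2 * k + 1) : R) * b (2 * n + 1 - 2 * k))
    {n k : ℕ} (hk : k ≤ n) :
    ((2 * n + 2).choose (2 * k) : R) * a (2 * n + 1 - 2 * k) =
      ∑ m ∈ Ico k (n + 1),
        ((2 * n + 2).choose (2 * m + 1) : R) * ((2 * m + 1).choose (2 * k)) *
          b (2 * n + 1 - 2 * m) := by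
  rw [show 2 * n + 1 - 2 * k = 2 * (n - k) + 1 by omega, hab, mul_sum, sum_Ico_eq_sum_range,
    show n + 1 - k = n - k + 1 by omega]
  refine sum_congr rfl fun j hj => ?_
  have hchoose := Nat.choose_mul (n := 2 * n + 2) (show 2 * k ≤ 2 * (k + j) + 1 by omega)
  rw [show 2 * n + 2 - 2 * k = 2 * (n - k) + 2 by omega,
    show 2 * (k + j) + 1 - 2 * k = 2 * j + 1 by omega] at hchoose
  rw [show 2 * (n - k) + 1 - 2 * j = 2 * n + 1 - 2 * (k + j) by grind, ← mul_assoc,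
    ← Nat.cast_mul, ← Nat.cast_mul, hchoose]

theorem inversion_of_sum_choose_mul_eq_ite {d : ℕ → R}
    (hd : ∀ m, ∑ k ∈ range (m + 1), ((2 * m + 1).choose (2 * k) : R) * d k =
      if m = 0 then 1 else 0)
    (hab : ∀ n, a (2 * n + 1) =
      ∑ k ∈ range (n + 1), ((2 * n + 2).choose (2 * k + 1) : R) * b (2 * n + 1 - 2 * k))
    (n : ℕ) :
    ((2 * n + 2 : ℕ) : R) * b (2 * n + 1) =
      ∑ k ∈ range (n + 1), ((2 * n + 2).choose (2 * k) : R) * d k * a (2 * n + 1 - 2 * k) :=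
  calc ((2 * n + 2 : ℕ) : R) * b (2 * n + 1)
    _ = ∑ m ∈ range (n + 1), ((2 * n + 2).choose (2 * m + 1) : R) * b (2 * n + 1 - 2 * m) *
          if m = 0 then 1 else 0 := by simp
    _ = ∑ m ∈ range (n + 1), ∑ k ∈ range (m + 1), ((2 * n + 2).choose (2 * m + 1) : R) *
          b (2 * n + 1 - 2 * m) * (((2 * m + 1).choose (2 * k) : R) * d k) := by
      simp only [← mul_sum, hd]
    _ = ∑ k ∈ range (n + 1), ∑ m ∈ Ico k (n + 1),
          d k * (((2 * n + 2).choose (2 * m + 1) : R) * ((2 * m + 1).choose (2 * k)) *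
            b (2 * n + 1 - 2 * m)) := by
      simp only [range_eq_Ico, sum_Ico_Ico_comm]
      refine sum_congr rfl fun k _ => sum_congr rfl fun m _ => by ring
    _ = _ := by
      refine sum_congr rfl fun k hk => ?_
      rw [← mul_sum, ← choose_mul_eq_sum_Ico_of_eq_sum hab (by grind)]
      ring

end

open PowerSeries Finset in
/-- **Lemma 8 of Date–Roan (inversion lemma).**  Let the numbers `d_{2j}` be defined by
the expansion `2x/(eˣ - e⁻ˣ) = Σ_j d_{2j} x^{2j}/(2j)!`.  If sequences `(a_k)`, `(b_k)`
satisfy `a_{2n+1} = Σ_{k=0}^n C(2n+2, 2k+1) b_{2n+1-2k}`, then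
`(2n+2) b_{2n+1} = Σ_{k=0}^n C(2n+2, 2k) d_{2k} a_{2n+1-2k}`. -/
theorem inversion_lemma (d : ℕ → ℚ)
    (hd : (2 : PowerSeries ℚ) * PowerSeries.X =
        (PowerSeries.exp ℚ - PowerSeries.rescale (-1) (PowerSeries.exp ℚ)) *
          PowerSeries.mk (fun n => if n % 2 = 0 then d (n / 2) / (n.factorial : ℚ) else 0))
    (a b : ℕ → ℚ)
    (hab : ∀ n : ℕ, a (2 * n + 1) =
        ∑ k ∈ range (n + 1),
          (Nat.choose (2 * n + 2) (2 * k + 1) : ℚ) * b (2 * n + 1 - 2 * k)) :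
    ∀ n : ℕ, ((2 * n + 2 : ℕ) : ℚ) * b (2 * n + 1) =
        ∑ k ∈ range (n + 1),
          (Nat.choose (2 * n + 2) (2 * k) : ℚ) * d k * a (2 * n + 1 - 2 * k) :=
  inversion_of_sum_choose_mul_eq_ite (sum_choose_mul_eq_ite_of_two_mul_X_eq hd) hab
end
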